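/- arXiv:1911.01954 — 8 statements merged into one kernel-verified Lean document; each statement's English description precedes it below -/
import Mathlib

section
/- A digraph D contains no directed cycle of odd length if and only if every strong component of D is bipartite (i.e. the underlying undirected graph of each strong component is bipartite). -/
open scoped Classical

variable {V : Type*} [Fintype V]

/-- The out-neighborhood of `v` in the digraph on `V` with edge relation `E`. -/
noncomputable def outNbrs (E : V → V → Prop) (v : V) : Finset V :=
  Finset.univ.filter (fun w => E v w)

/-- The in-neighborhood of `v` in the digraph on `V` with edge relation `E`. -/
noncomputable def inNbrs (E : V → V → Prop) (v : V) : Finset V :=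
  Finset.univ.filter (fun w => E w v)

/-- `c` is a majority coloring of the digraph `(V, E)`: every vertex `v` has at
most `d⁺(v)/2` out-neighbors `w` with `c w = c v`. -/
def IsMajorityColoring {α : Type*} (E : V → V → Prop) (c : V → α) : Prop :=
  ∀ v : V, 2 * ((outNbrs E v).filter (fun w => c w = c v)).card ≤ (outNbrs E v).card

/-- `l` is the vertex list of a directed cycle: a nonempty list of pairwise
distinct vertices in which each vertex has an edge to the next one, and the
last vertex has an edge back to the first one. -/
def IsDiCycle (E : V → V → Prop) (l : List V) : Prop :=
  l ≠ [] ∧ l.Nodup ∧ l.Chain' E ∧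
    ∃ a b, l.head? = some a ∧ l.getLast? = some b ∧ E b a

/-- All vertices of the list `l` get the same color under `c`. -/
def MonochromaticList {α : Type*} (c : V → α) (l : List V) : Prop :=
  ∀ u ∈ l, ∀ w ∈ l, c u = c w

/-- The digraph `(V, E)` is majority `k`-choosable: for every assignment of
lists of size at least `k` to the vertices there is a majority coloring
choosing each vertex's color from its list. -/
def MajorityChoosable (E : V → V → Prop) (k : ℕ) : Prop :=
  ∀ L : V → Finset ℕ, (∀ v, k ≤ (L v).card) →
    ∃ c : V → ℕ, (∀ v, c v ∈ L v) ∧ IsMajorityColoring E c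

/-- Every ordered pair of vertices of `S` is joined by a directed walk staying
inside `S` (i.e. the subdigraph induced on `S` is strongly connected). -/
def StronglyConnectedIn (E : V → V → Prop) (S : Set V) : Prop :=
  ∀ u ∈ S, ∀ v ∈ S, Relation.ReflTransGen (fun a b => a ∈ S ∧ b ∈ S ∧ E a b) u v

/-- `S` is a strong component of `(V, E)`: a maximal vertex set inducing a
strongly connected subdigraph. -/
def IsStrongComponent (E : V → V → Prop) (S : Set V) : Prop :=
  S.Nonempty ∧ StronglyConnectedIn E S ∧
    ∀ T : Set V, S ⊆ T → StronglyConnectedIn E T → T ⊆ S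

/-!
An odd closed walk contains an odd directed cycle: cutting it at a repeated vertex gives two
shorter closed walks whose lengths add up to the original one, so one of them is odd. Hence,
without odd directed cycles, two walks between the same vertices of a strong component have
lengths of equal parity (close both up with the same return walk), and colouring each vertex by
the parity of the walks reaching it from a fixed root is a proper 2-colouring. Conversely, an
odd directed cycle lies inside one strong component, and a proper 2-colouring would have to
alternate around it.
-/

section Walks

variable {α : Type*} {R S : α → α → Prop} {u v w : α} {l l₁ l₂ : List α}

/-- `u :: l` is the vertex sequence of an `R`-walk from `u` to `v`, of length `l.length`. -/
inductive IsWalk (R : α → α → Prop) : α → List α → α → Prop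
  | nil (u : α) : IsWalk R u [] u
  | cons {u v w : α} {l : List α} : R u v → IsWalk R v l w → IsWalk R u (v :: l) w

namespace IsWalk

theorem append (h₁ : IsWalk R u l₁ v) (h₂ : IsWalk R v l₂ w) : IsWalk R u (l₁ ++ l₂) w := by
  induction h₁ with
  | nil => exact h₂
  | cons huv _ ih => exact cons huv (ih h₂)

theorem concat (h : IsWalk R u l v) (hvw : R v w) : IsWalk R u (l ++ [w]) w :=
  h.append (cons hvw (nil w))

theorem exists_of_append (h : IsWalk R u (l₁ ++ l₂) w) :
    ∃ v, IsWalk R u l₁ v ∧ IsWalk R v l₂ w := by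
  induction l₁ generalizing u with
  | nil => exact ⟨u, nil u, h⟩
  | cons x l₁ ih =>
    cases h with
    | cons hux h =>
      obtain ⟨v, h₁, h₂⟩ := ih h
      exact ⟨v, cons hux h₁, h₂⟩

theorem mono (hRS : ∀ a b, R a b → S a b) (h : IsWalk R u l v) : IsWalk S u l v := by
  induction h with
  | nil u => exact nil u
  | cons huv _ ih => exact cons (hRS _ _ huv) ih

theorem reflTransGen (h : IsWalk R u l v) : Relation.ReflTransGen R u v := by
  induction h with
  | nil => exact .refl
  | cons huv _ ih => exact .head huv ih

theorem bool_eq_iff_even_length {f : α → Bool} (hf : ∀ a b, R a b → f a ≠ f b)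
    (h : IsWalk R u l v) : f u = f v ↔ Even l.length := by
  induction h with
  | nil => simp
  | @cons a b c l hab _ ih =>
    have hfab := hf a b hab
    rw [List.length_cons, Nat.even_add_one, ← ih]
    revert hfab
    cases f a <;> cases f b <;> cases f c <;> simp

end IsWalk

theorem Relation.ReflTransGen.exists_isWalk (h : Relation.ReflTransGen R u v) :
    ∃ l, IsWalk R u l v := by
  induction h using Relation.ReflTransGen.head_induction_on with
  | refl => exact ⟨[], .nil v⟩
  | head hab _ ih =>
    obtain ⟨l, hl⟩ := ih
    exact ⟨_, .cons hab hl⟩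

theorem isWalk_iff_isChain : IsWalk R u l v ↔ (u :: l).IsChain R ∧ (u :: l).getLast? = some v := by
  induction l generalizing u with
  | nil =>
    constructor
    · rintro ⟨⟩
      simp
    · rintro ⟨-, h⟩
      cases Option.some.inj h
      exact .nil u
  | cons x l ih =>
    rw [List.isChain_cons_cons, List.getLast?_cons_cons]
    constructor
    · rintro (_ | ⟨hux, h⟩)
      exact ⟨⟨hux, (ih.mp h).1⟩, (ih.mp h).2⟩
    · rintro ⟨⟨hux, hc⟩, hl⟩
      exact .cons hux (ih.mpr ⟨hc, hl⟩)

theorem IsWalk.isDiCycle (h : IsWalk R u l u) (hnd : l.Nodup) (hne : l ≠ []) :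
    IsDiCycle R l := by
  obtain ⟨x, l, rfl⟩ := List.exists_cons_of_ne_nil hne
  obtain ⟨hc, hl⟩ := isWalk_iff_isChain.mp h
  rw [List.isChain_cons_cons] at hc
  rw [List.getLast?_cons_cons] at hl
  exact ⟨hne, hnd, hc.2, x, u, rfl, hl, hc.1⟩

theorem IsDiCycle.exists_isWalk (h : IsDiCycle R l) : ∃ u, IsWalk R u l u := by
  obtain ⟨hne, -, hc, a, b, ha, hb, hba⟩ := h
  obtain ⟨x, l, rfl⟩ := List.exists_cons_of_ne_nil hne
  cases Option.some.inj ha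
  refine ⟨b, isWalk_iff_isChain.mpr ⟨List.isChain_cons_cons.mpr ⟨hba, hc⟩, ?_⟩⟩
  rwa [List.getLast?_cons_cons]

theorem List.exists_eq_append_cons_append_cons_of_not_nodup (h : ¬ l.Nodup) :
    ∃ a p q s, l = p ++ a :: (q ++ a :: s) := by
  obtain ⟨a, ha⟩ : ∃ a, List.Sublist [a, a] l := by simpa [List.nodup_iff_sublist] using h
  obtain ⟨r₁, r₂, rfl, h₁, h₂⟩ := List.cons_sublist_iff.mp ha
  obtain ⟨p, q₁, rfl⟩ := List.append_of_mem h₁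
  obtain ⟨q₂, s, rfl⟩ := List.append_of_mem (List.singleton_sublist.mp h₂)
  exact ⟨a, p, q₁ ++ q₂, s, by simp⟩

theorem IsWalk.exists_split_of_not_nodup (h : IsWalk R u l u) (hnd : ¬ l.Nodup) :
    ∃ a l₁ l₂, IsWalk R a l₁ a ∧ IsWalk R u l₂ u ∧ l₁ ≠ [] ∧ l₂ ≠ [] ∧
      l₁.length + l₂.length = l.length := by
  obtain ⟨a, p, q, s, rfl⟩ := List.exists_eq_append_cons_append_cons_of_not_nodup hnd
  obtain ⟨b, hp, h⟩ := h.exists_of_append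
  obtain _ | ⟨hba, h⟩ := h
  obtain ⟨c, hq, h⟩ := h.exists_of_append
  obtain _ | ⟨hca, hs⟩ := h
  refine ⟨a, q ++ [a], p ++ a :: s, hq.concat hca, hp.append (.cons hba hs), by simp, by simp, ?_⟩
  simp only [List.length_append, List.length_cons, List.length_nil]
  omega

theorem IsWalk.exists_odd_isDiCycle (h : IsWalk R u l u) (hodd : Odd l.length) :
    ∃ c, IsDiCycle R c ∧ Odd c.length := by
  induction hn : l.length using Nat.strong_induction_on generalizing u l with
  | _ n ih =>
    by_cases hnd : l.Nodup
    · exact ⟨l, h.isDiCycle hnd (List.ne_nil_of_length_pos hodd.pos), hodd⟩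
    obtain ⟨a, l₁, l₂, h₁, h₂, hne₁, hne₂, hlen⟩ := h.exists_split_of_not_nodup hnd
    have hpos₁ := List.length_pos_iff.mpr hne₁
    have hpos₂ := List.length_pos_iff.mpr hne₂
    rcases Nat.even_or_odd l₁.length with heven | hodd₁
    · have hodd₂ : Odd l₂.length := by
        rw [← hlen, Nat.odd_add'] at hodd
        exact hodd.mpr heven
      exact ih _ (by omega) h₂ hodd₂ rfl
    · exact ih _ (by omega) h₁ hodd₁ rfl

end Walks

section StrongComponents

variable {α : Type*} {R : α → α → Prop} {S : Set α} {u v c r : α} {l : List α}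

def inducedRel (R : α → α → Prop) (S : Set α) (a b : α) : Prop :=
  a ∈ S ∧ b ∈ S ∧ R a b

def strongComponentOf (R : α → α → Prop) (c : α) : Set α :=
  {x | Relation.ReflTransGen R c x ∧ Relation.ReflTransGen R x c}

theorem IsWalk.inducedRel_strongComponentOf (h : IsWalk R u l v)
    (hcu : Relation.ReflTransGen R c u) (hvc : Relation.ReflTransGen R v c) :
    IsWalk (inducedRel R (strongComponentOf R c)) u l v := by
  induction h with
  | nil u => exact .nil u
  | cons huw hw ih =>
    have hwc := hw.reflTransGen.trans hvc
    exact .cons ⟨⟨hcu, .head huw hwc⟩, ⟨hcu.tail huw, hwc⟩, huw⟩ (ih (hcu.tail huw) hvc)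

theorem isStrongComponent_strongComponentOf (R : α → α → Prop) (c : α) :
    IsStrongComponent R (strongComponentOf R c) := by
  refine ⟨⟨c, .refl, .refl⟩, fun x hx y hy => ?_, fun T hT hconn x hx => ?_⟩
  · obtain ⟨l, hl⟩ := (hx.2.trans hy.1).exists_isWalk
    exact (hl.inducedRel_strongComponentOf hx.1 hy.2).reflTransGen
  · have hc : c ∈ T := hT ⟨.refl, .refl⟩
    have hE : ∀ a b, (a ∈ T ∧ b ∈ T ∧ R a b) → R a b := fun _ _ h => h.2.2
    exact ⟨Relation.ReflTransGen.mono hE _ _ (hconn c hc x hx),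
      Relation.ReflTransGen.mono hE _ _ (hconn x hx c hc)⟩

theorem exists_bool_coloring_of_even_closed_walks (hr : r ∈ S)
    (hconn : ∀ u ∈ S, ∀ v ∈ S, Relation.ReflTransGen R u v)
    (heven : ∀ u l, IsWalk R u l u → Even l.length) :
    ∃ f : α → Bool, ∀ u ∈ S, ∀ v ∈ S, R u v → f u ≠ f v := by
  have hparity : ∀ v ∈ S, ∀ l₁ l₂, IsWalk R r l₁ v → IsWalk R r l₂ v →
      (Even l₁.length ↔ Even l₂.length) := by
    intro v hv l₁ l₂ h₁ h₂
    obtain ⟨m, hm⟩ := (hconn v hv r hr).exists_isWalk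
    have e₁ := heven _ _ (h₁.append hm)
    have e₂ := heven _ _ (h₂.append hm)
    rw [List.length_append, Nat.even_add] at e₁ e₂
    rw [e₁, e₂]
  have hcolor : ∀ v ∈ S, ∀ l, IsWalk R r l v →
      ((∃ l', IsWalk R r l' v ∧ Even l'.length) ↔ Even l.length) := fun v hv l hl =>
    ⟨fun ⟨l', hl', he⟩ => (hparity v hv l' l hl' hl).mp he, fun he => ⟨l, hl, he⟩⟩
  refine ⟨fun v => decide (∃ l, IsWalk R r l v ∧ Even l.length), fun u hu v hv huv => ?_⟩
  obtain ⟨l, hl⟩ := (hconn r hr u hu).exists_isWalk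
  simp only [ne_eq, decide_eq_decide, hcolor u hu l hl, hcolor v hv _ (hl.concat huv),
    List.length_append, List.length_singleton, Nat.even_add_one]
  tauto

end StrongComponents

theorem no_odd_dicycle_iff_strong_components_bipartite_general
    {V : Type*} (E : V → V → Prop) :
    (¬ ∃ l : List V, IsDiCycle E l ∧ Odd l.length) ↔
      ∀ S : Set V, IsStrongComponent E S →
        ∃ f : V → Bool, ∀ u ∈ S, ∀ v ∈ S, (E u v ∨ E v u) → f u ≠ f v := by
  constructor
  · rintro hno S ⟨⟨r, hr⟩, hconn, -⟩
    have heven : ∀ u l, IsWalk (inducedRel E S) u l u → Even l.length := fun u l h =>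
      Nat.not_odd_iff_even.mp fun hodd =>
        hno ((h.mono fun _ _ hab => hab.2.2).exists_odd_isDiCycle hodd)
    obtain ⟨f, hf⟩ := exists_bool_coloring_of_even_closed_walks hr hconn heven
    refine ⟨f, fun u hu v hv huv => ?_⟩
    rcases huv with huv | hvu
    · exact hf u hu v hv ⟨hu, hv, huv⟩
    · exact (hf v hv u hu ⟨hv, hu, hvu⟩).symm
  · rintro hbip ⟨l, hcycle, hodd⟩
    obtain ⟨c, hc⟩ := hcycle.exists_isWalk
    obtain ⟨f, hf⟩ := hbip _ (isStrongComponent_strongComponentOf E c)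
    have hcolor := (hc.inducedRel_strongComponentOf .refl .refl).bool_eq_iff_even_length
      fun a b hab => hf a hab.1 b hab.2.1 (.inl hab.2.2)
    exact Nat.not_even_iff_odd.mpr hodd (hcolor.mp rfl)

/-- A digraph contains no directed cycle of odd length iff the
underlying graph of each of its strong components is bipartite. -/
theorem no_odd_dicycle_iff_strong_components_bipartite
    {V : Type*} [Fintype V] (E : V → V → Prop) (hloopless : ∀ v : V, ¬ E v v) :
    (¬ ∃ l : List V, IsDiCycle E l ∧ Odd l.length) ↔
      ∀ S : Set V, IsStrongComponent E S →
        ∃ f : V → Bool, ∀ u ∈ S, ∀ v ∈ S, (E u v ∨ E v u) → f u ≠ f v :=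
  no_odd_dicycle_iff_strong_components_bipartite_general E
end

section
/- Let D be a digraph which contains no directed cycle of odd length, and let p be any pre-coloring of the sinks of D (vertices of out-degree 0) with colors from {1,2}. Then there exists a majority coloring of D with colors {1,2} which agrees with p on every sink of D. -/
open scoped Classical

variable {V : Type*} [Fintype V]

set_option linter.unusedSectionVars false

section AuxiliaryMajority

lemma myNotNodupDecomp : ∀ (l : List V), ¬ l.Nodup →
    ∃ (p : List V) (x : V) (q r : List V), l = p ++ x :: (q ++ x :: r) := by
  intro l
  induction l with
  | nil => intro h; exact absurd List.nodup_nil h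
  | cons y t ih =>
    intro h
    rw [List.nodup_cons] at h
    push_neg at h
    by_cases hy : y ∈ t
    · obtain ⟨q, r, rfl⟩ := List.append_of_mem hy
      exact ⟨[], y, q, r, rfl⟩
    · obtain ⟨p, x, q, r, rfl⟩ := ih (h hy)
      exact ⟨y :: p, x, q, r, rfl⟩

lemma myOddCycleExtract {E : V → V → Prop} (hloop : ∀ v, ¬ E v v) :
    ∀ (n : ℕ) (a : V) (m : List V), (a :: (m ++ [a])).Chain' E → Odd (m.length + 1) →
      m.length < n → ∃ l, IsDiCycle E l ∧ Odd l.length := by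
  intro n
  induction n with
  | zero => intro a m _ _ h; omega
  | succ n ih =>
    intro a m hch hodd hlen
    by_cases hnd : (a :: m).Nodup
    · refine ⟨a :: m, ⟨by simp, hnd, ?_, a, (a :: m).getLast (by simp), rfl,
        List.getLast?_eq_getLast _, ?_⟩, by simpa using hodd⟩
      · exact hch.prefix ⟨[a], by simp⟩
      · have h2 : ((a :: m) ++ [a]).Chain' E := by simpa using hch
        rw [List.Chain', List.isChain_append] at h2
        exact h2.2.2 _ (List.getLast?_eq_getLast _) a rfl
    · obtain ⟨p, x, q, r, heq⟩ := myNotNodupDecomp _ hnd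
      have hw : (p ++ (x :: (q ++ (x :: (r ++ [a]))))).Chain' E := by
        have h3 : a :: (m ++ [a]) = p ++ (x :: (q ++ (x :: (r ++ [a])))) := by
          rw [show a :: (m ++ [a]) = (a :: m) ++ [a] by simp, heq]; simp
        rwa [h3] at hch
      rw [List.Chain', List.isChain_append] at hw
      obtain ⟨hp, hrest, hpx⟩ := hw
      have hrest2 : ((x :: q) ++ (x :: (r ++ [a]))).Chain' E := by simpa [List.Chain'] using hrest
      rw [List.Chain', List.isChain_append] at hrest2
      obtain ⟨hxq, hxr, hqx⟩ := hrest2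
      have hqxE : E ((x :: q).getLast (by simp)) x :=
        hqx _ (List.getLast?_eq_getLast _) x rfl
      rcases q with _ | ⟨q0, qt⟩
      · exact absurd (by simpa using hqxE) (hloop x)
      · have hm : m.length = p.length + qt.length + r.length + 2 := by
          have := congrArg List.length heq
          simp at this
          omega
        -- parity split
        rw [Nat.odd_iff] at hodd
        have hsplit : (qt.length + 1 + 1) % 2 = 1 ∨ (p.length + r.length + 1) % 2 = 1 := by
          omega
        rcases hsplit with hodd1 | hodd2
        · -- walk 1 : x :: ((q0 :: qt) ++ [x])
          have hw1 : (x :: ((q0 :: qt) ++ [x])).Chain' E := by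
            have : ((x :: q0 :: qt) ++ [x]).Chain' E :=
              List.isChain_append.2 ⟨hxq, by simp, by
                intro u hu y hy
                simp at hy
                subst hy
                exact hqx u hu x rfl⟩
            simpa using this
          exact ih x (q0 :: qt) hw1 (by rw [Nat.odd_iff]; simpa using hodd1)
            (by simp only [List.length_cons]; omega)
        · -- walk 2
          rcases p with _ | ⟨b, pt⟩
          · -- p = [], so a = x
            have hax : x = a := by
              have h5 := congrArg List.head? heq
              simp at h5
              exact h5.symm
            subst hax
            simp only [List.length_nil] at hodd2
            exact ih x r hxr (by rw [Nat.odd_iff]; omega) (by omega)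
          · have hab : b = a := by
              have h5 := congrArg List.head? heq
              simp at h5
              exact h5.symm
            subst hab
            simp only [List.length_cons] at hodd2 hm
            have hw2 : (b :: ((pt ++ x :: r) ++ [b])).Chain' E := by
              have : ((b :: pt) ++ (x :: (r ++ [b]))).Chain' E :=
                List.isChain_append.2 ⟨hp, hxr, by
                  intro u hu y hy
                  simp at hy
                  subst hy
                  exact hpx u hu x rfl⟩
              simpa using this
            exact ih b (pt ++ x :: r) hw2
              (by rw [Nat.odd_iff]; simp only [List.length_append, List.length_cons]; omega)
              (by simp only [List.length_append, List.length_cons]; omega)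

/-- parity-tagged edge relation on `V × Bool`. -/
def myE2 (E : V → V → Prop) : V × Bool → V × Bool → Prop :=
  fun x y => E x.1 y.1 ∧ y.2 = !x.2

/-- parity-tagged reachability. -/
def myRP (E : V → V → Prop) (u : V) (s : Bool) (v : V) (t : Bool) : Prop :=
  Relation.ReflTransGen (myE2 E) (u, s) (v, t)

lemma myRP_shift' {E : V → V → Prop} {x y : V × Bool}
    (h : Relation.ReflTransGen (myE2 E) x y) :
    Relation.ReflTransGen (myE2 E) (x.1, !x.2) (y.1, !y.2) := by
  induction h with
  | refl => exact Relation.ReflTransGen.refl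
  | tail h1 h2 ih =>
    exact Relation.ReflTransGen.tail ih ⟨h2.1, by simp [h2.2]⟩

lemma myRP_shift {E : V → V → Prop} {u v : V} {s t : Bool}
    (h : myRP E u s v t) : myRP E u (!s) v (!t) := myRP_shift' h

lemma myRP_proj {E : V → V → Prop} {x y : V × Bool}
    (h : Relation.ReflTransGen (myE2 E) x y) : Relation.ReflTransGen E x.1 y.1 := by
  induction h with
  | refl => exact Relation.ReflTransGen.refl
  | tail h1 h2 ih => exact Relation.ReflTransGen.tail ih h2.1

lemma myRP_lift {E : V → V → Prop} {u v : V} (h : Relation.ReflTransGen E u v) :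
    ∀ s : Bool, ∃ t : Bool, myRP E u s v t := by
  induction h with
  | refl => exact fun s => ⟨s, Relation.ReflTransGen.refl⟩
  | tail h1 h2 ih =>
    intro s
    obtain ⟨t, ht⟩ := ih s
    exact ⟨!t, Relation.ReflTransGen.tail ht ⟨h2, rfl⟩⟩

lemma myChainParity {E : V → V → Prop} :
    ∀ (l : List (V × Bool)) (x : V × Bool), List.Chain (myE2 E) x l →
      (((x :: l).getLast (List.cons_ne_nil _ _)).2 = x.2 ↔ Even l.length) := by
  intro l
  induction l with
  | nil => intro x _; simp
  | cons b t ih =>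
    intro x hch
    rw [List.Chain, List.chain_cons] at hch
    obtain ⟨hxb, hbt⟩ := hch
    have h1 := ih b hbt
    rw [hxb.2] at h1
    rw [List.getLast_cons_cons]
    simp only [List.length_cons, Nat.even_add_one]
    rw [← h1]
    cases hx : x.2 <;> simp [hx]

/-- no odd closed walks -/
lemma myNoOddClosed {E : V → V → Prop} (hloop : ∀ v, ¬ E v v)
    (hodd : ¬ ∃ l : List V, IsDiCycle E l ∧ Odd l.length) (v : V) (s : Bool) :
    ¬ myRP E v s v (!s) := by
  intro h
  obtain ⟨l, hch, hlast⟩ := List.exists_isChain_cons_of_relationReflTransGen h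
  -- parity: l.length is odd
  have hpar := (myChainParity l (v, s) hch)
  rw [hlast] at hpar
  have hlodd : ¬ Even l.length := by
    intro he
    have := hpar.2 he
    cases s <;> simp at this
  -- l is nonempty, project to V
  rcases l.eq_nil_or_concat with rfl | ⟨l', e, rfl⟩
  · simp at hlodd
  · rw [List.concat_eq_append] at hch hlast hlodd
    have h6 : ((v, s) :: (l' ++ [e])).getLast (List.cons_ne_nil _ _) = e := by
      have h7 : ((v, s) :: (l' ++ [e])).getLast? = some e := by
        rw [show ((v, s) :: (l' ++ [e])) = (((v, s) :: l') ++ [e]) by simp,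
          List.getLast?_concat]
      rw [List.getLast?_eq_getLast (List.cons_ne_nil _ _)] at h7
      exact Option.some_inj.mp h7
    have hlaste : e = (v, !s) := by rw [h6] at hlast; exact hlast
    subst hlaste
    have hch' : ((v, s) :: (l' ++ [(v, !s)])).Chain' (myE2 E) := hch
    have hchV : ((v, s) :: (l' ++ [(v, !s)])).Chain' (fun a b : V × Bool => E a.1 b.1) :=
      hch'.imp (fun _ _ hab => hab.1)
    have hmap : ((((v, s) :: (l' ++ [(v, !s)]))).map Prod.fst).Chain' E := by
      rw [List.Chain', List.isChain_map]
      exact hchV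
    have hform : (((v, s) :: (l' ++ [(v, !s)]))).map Prod.fst
        = v :: ((l'.map Prod.fst) ++ [v]) := by simp
    rw [hform] at hmap
    apply hodd
    apply myOddCycleExtract hloop ((l'.map Prod.fst).length + 1) v (l'.map Prod.fst) hmap
    · rw [Nat.odd_iff]
      simp only [List.length_append, List.length_map, List.length_singleton,
        Nat.even_iff] at hlodd ⊢
      omega
    · omega

variable [Fintype V]

def myR (E : V → V → Prop) : V → V → Prop := Relation.ReflTransGen E

def myComp (E : V → V → Prop) (u v : V) : Prop := myR E u v ∧ myR E v u

lemma myComp_refl (E : V → V → Prop) (v : V) : myComp E v v :=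
  ⟨Relation.ReflTransGen.refl, Relation.ReflTransGen.refl⟩

lemma myComp_symm {E : V → V → Prop} {u v : V} (h : myComp E u v) : myComp E v u := ⟨h.2, h.1⟩

lemma myComp_trans {E : V → V → Prop} {u v w : V} (h1 : myComp E u v) (h2 : myComp E v w) :
    myComp E u w := ⟨h1.1.trans h2.1, h2.2.trans h1.2⟩

noncomputable def myL (E : V → V → Prop) (v : V) : ℕ :=
  (Finset.univ.filter (fun w => myR E v w)).card

lemma myL_subset {E : V → V → Prop} {u v : V} (h : E u v) :
    Finset.univ.filter (fun w => myR E v w) ⊆ Finset.univ.filter (fun w => myR E u w) := by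
  intro w hw
  rw [Finset.mem_filter] at hw ⊢
  exact ⟨hw.1, Relation.ReflTransGen.head h hw.2⟩

lemma myL_le {E : V → V → Prop} {u v : V} (h : E u v) : myL E v ≤ myL E u :=
  Finset.card_le_card (myL_subset h)

lemma myL_comp {E : V → V → Prop} {u v : V} (h : E u v) (hL : myL E u = myL E v) :
    myComp E u v := by
  have heq := Finset.eq_of_subset_of_card_le (myL_subset h) (le_of_eq hL)
  have hu : u ∈ Finset.univ.filter (fun w => myR E u w) := by
    rw [Finset.mem_filter]
    exact ⟨Finset.mem_univ _, Relation.ReflTransGen.refl⟩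
  rw [← heq, Finset.mem_filter] at hu
  exact ⟨Relation.ReflTransGen.single h, hu.2⟩

lemma myL_le_card (E : V → V → Prop) (v : V) : myL E v ≤ Fintype.card V := by
  rw [← Finset.card_univ]
  exact Finset.card_filter_le _ _

lemma my_min'_congr {n : ℕ} {s t : Finset (Fin n)} (h : s = t) (hs : s.Nonempty)
    (ht : t.Nonempty) : s.min' hs = t.min' ht := by subst h; rfl

noncomputable def myRep (E : V → V → Prop) (v : V) : V :=
  (Fintype.equivFin V).symm
    (((Finset.univ.filter (fun w => myComp E v w)).image (Fintype.equivFin V)).min'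
      (Finset.Nonempty.image ⟨v, Finset.mem_filter.2 ⟨Finset.mem_univ v, myComp_refl E v⟩⟩ _))

lemma myRep_comp (E : V → V → Prop) (v : V) : myComp E v (myRep E v) := by
  have hmem := Finset.min'_mem _
    (Finset.Nonempty.image ⟨v, Finset.mem_filter.2 ⟨Finset.mem_univ v, myComp_refl E v⟩⟩
      (Fintype.equivFin V))
  obtain ⟨w, hw, he⟩ := Finset.mem_image.mp hmem
  have : myRep E v = w := by rw [myRep, ← he, Equiv.symm_apply_apply]
  rw [this]
  exact (Finset.mem_filter.mp hw).2

lemma myRep_eq {E : V → V → Prop} {u v : V} (h : myComp E u v) : myRep E u = myRep E v := by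
  have hset : Finset.univ.filter (fun w => myComp E u w)
      = Finset.univ.filter (fun w => myComp E v w) := by
    ext w
    simp only [Finset.mem_filter, Finset.mem_univ, true_and]
    exact ⟨fun hw => myComp_trans (myComp_symm h) hw, fun hw => myComp_trans h hw⟩
  rw [myRep, myRep]
  congr 1
  exact my_min'_congr (by rw [hset]) _ _

lemma myRP_unique {E : V → V → Prop} (hloop : ∀ v, ¬ E v v)
    (hodd : ¬ ∃ l : List V, IsDiCycle E l ∧ Odd l.length) {u v : V} {s t t' : Bool}
    (h : myComp E u v) (h1 : myRP E u s v t) (h2 : myRP E u s v t') : t = t' := by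
  by_contra hne
  have ht' : t' = !t := by cases t <;> cases t' <;> simp_all
  subst ht'
  obtain ⟨c, hc⟩ := myRP_lift h.2 t
  have hA : myRP E u s u c := Relation.ReflTransGen.trans h1 hc
  have hB : myRP E u s u (!c) := by
    have := myRP_shift hc
    exact Relation.ReflTransGen.trans h2 this
  by_cases hcs : c = s
  · subst hcs
    exact myNoOddClosed hloop hodd u c hB
  · have : c = !s := by cases c <;> cases s <;> simp_all
    subst this
    exact myNoOddClosed hloop hodd u s hA

noncomputable def myBeta (E : V → V → Prop) (v : V) : Bool :=
  decide (myRP E (myRep E v) false v true)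

lemma myBeta_spec {E : V → V → Prop} (v : V) :
    myRP E (myRep E v) false v (myBeta E v) := by
  by_cases h : myRP E (myRep E v) false v true
  · have : myBeta E v = true := by simp [myBeta, h]
    rw [this]; exact h
  · have hb : myBeta E v = false := by simp [myBeta, h]
    rw [hb]
    obtain ⟨t, ht⟩ := myRP_lift (myRep_comp E v).2 false
    cases t
    · exact ht
    · exact absurd ht h

lemma myBeta_flip {E : V → V → Prop} (hloop : ∀ v, ¬ E v v)
    (hodd : ¬ ∃ l : List V, IsDiCycle E l ∧ Odd l.length) {u v : V}
    (hE : E u v) (hc : myComp E u v) : myBeta E u ≠ myBeta E v := by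
  have hrep : myRep E u = myRep E v := myRep_eq hc
  have h1 : myRP E (myRep E v) false v (!myBeta E u) := by
    rw [← hrep]
    exact Relation.ReflTransGen.tail (myBeta_spec u) ⟨hE, rfl⟩
  have h2 := myBeta_spec (E := E) v
  have hcomp : myComp E (myRep E v) v := myComp_symm (myRep_comp E v)
  have h3 := myRP_unique hloop hodd hcomp h1 h2
  rw [← h3]
  cases myBeta E u <;> simp

variable (E : V → V → Prop)

def myGood (pb : V → Bool) (b : V → Bool) (v : V) : Prop :=
  2 * ((outNbrs E v).filter (fun w => b w = b v)).card ≤ (outNbrs E v).card ∧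
    (outNbrs E v = ∅ → b v = pb v)

noncomputable def myResp (pb : V → Bool) (b : V → Bool) (v : V) : Bool :=
  if outNbrs E v = ∅ then pb v
  else decide (((outNbrs E v).filter (fun w => b w = true)).card
      < ((outNbrs E v).filter (fun w => b w = false)).card)

lemma myCount (b : V → Bool) (v : V) :
    ((outNbrs E v).filter (fun w => b w = true)).card
      + ((outNbrs E v).filter (fun w => b w = false)).card = (outNbrs E v).card := by
  have h := Finset.card_filter_add_card_filter_not (s := outNbrs E v)
    (p := fun w => b w = true)
  have h2 : (outNbrs E v).filter (fun w => ¬ b w = true)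
      = (outNbrs E v).filter (fun w => b w = false) := by
    apply Finset.filter_congr
    intro w _
    simp
  rw [h2] at h
  exact h

lemma myResp_good (pb : V → Bool) (b : V → Bool) (v : V)
    (hfix : b v = myResp E pb b v) : myGood E pb b v := by
  by_cases hs : outNbrs E v = ∅
  · constructor
    · rw [hs]; simp
    · intro _; rw [hfix, myResp, if_pos hs]
  · refine ⟨?_, fun h => absurd h hs⟩
    rw [myResp, if_neg hs] at hfix
    have hcount := myCount E b v
    by_cases hlt : ((outNbrs E v).filter (fun w => b w = true)).card
        < ((outNbrs E v).filter (fun w => b w = false)).card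
    · have hbv : b v = true := by rw [hfix]; simp [hlt]
      rw [hbv]
      omega
    · have hbv : b v = false := by rw [hfix]; simp [hlt]
      rw [hbv]
      omega

noncomputable def myBOf (E : V → V → Prop) (bprev : V → Bool) (ℓ : ℕ) (X : Set V) (v : V) :
    Bool :=
  if myL E v = ℓ then (decide (v ∈ X)).xor (myBeta E v) else bprev v

lemma myStep {E : V → V → Prop} (hloop : ∀ v, ¬ E v v)
    (hodd : ¬ ∃ l : List V, IsDiCycle E l ∧ Odd l.length) (pb : V → Bool) (ℓ : ℕ)
    (bprev : V → Bool) (hprev : ∀ v, myL E v < ℓ → myGood E pb bprev v) :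
    ∃ b : V → Bool, ∀ v, myL E v < ℓ + 1 → myGood E pb b v := by
  classical
  have houtE : ∀ v w, w ∈ outNbrs E v → E v w := fun v w hw => (Finset.mem_filter.mp hw).2
  have hmono : Monotone (fun X => {v | myL E v = ℓ ∧
      myResp E pb (myBOf E bprev ℓ X) v ≠ myBeta E v} : Set V → Set V) := by
    intro X Y hXY v hv
    obtain ⟨hvL, hvr⟩ := hv
    refine ⟨hvL, ?_⟩
    by_cases hs : outNbrs E v = ∅
    · rw [myResp, if_pos hs] at hvr ⊢
      exact hvr
    · rw [myResp, if_neg hs] at hvr ⊢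
      have hkey : ∀ w ∈ outNbrs E v, myL E w = ℓ → myBeta E w = !(myBeta E v) := by
        intro w hw hLw
        have hE := houtE v w hw
        have hcomp := myL_comp hE (by rw [hvL, hLw])
        have hne := myBeta_flip hloop hodd hE hcomp
        cases h1 : myBeta E v <;> cases h2 : myBeta E w <;> simp_all
      cases hβ : myBeta E v
      · rw [hβ] at hvr
        have hP : ((outNbrs E v).filter (fun w => myBOf E bprev ℓ X w = true)).card
            < ((outNbrs E v).filter (fun w => myBOf E bprev ℓ X w = false)).card := by
          simpa using hvr
        have hTT : ∀ w ∈ outNbrs E v,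
            myBOf E bprev ℓ Y w = true → myBOf E bprev ℓ X w = true := by
          intro w hw hb
          by_cases hLw : myL E w = ℓ
          · have hβw : myBeta E w = true := by rw [hkey w hw hLw, hβ]; rfl
            simp only [myBOf, if_pos hLw, hβw] at hb ⊢
            have hny : w ∉ Y := by simpa using hb
            have hnx : w ∉ X := fun hx => hny (hXY hx)
            simpa using hnx
          · simp only [myBOf, if_neg hLw] at hb ⊢
            exact hb
        have hFF : ∀ w ∈ outNbrs E v,
            myBOf E bprev ℓ X w = false → myBOf E bprev ℓ Y w = false := by
          intro w hw hb
          by_cases hLw : myL E w = ℓ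
          · have hβw : myBeta E w = true := by rw [hkey w hw hLw, hβ]; rfl
            simp only [myBOf, if_pos hLw, hβw] at hb ⊢
            have hmy : w ∈ X := by simpa using hb
            have : w ∈ Y := hXY hmy
            simpa using this
          · simp only [myBOf, if_neg hLw] at hb ⊢
            exact hb
        have hc1 : ((outNbrs E v).filter (fun w => myBOf E bprev ℓ Y w = true)).card
            ≤ ((outNbrs E v).filter (fun w => myBOf E bprev ℓ X w = true)).card := by
          apply Finset.card_le_card
          intro w hw
          rw [Finset.mem_filter] at hw ⊢
          exact ⟨hw.1, hTT w hw.1 hw.2⟩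
        have hc2 : ((outNbrs E v).filter (fun w => myBOf E bprev ℓ X w = false)).card
            ≤ ((outNbrs E v).filter (fun w => myBOf E bprev ℓ Y w = false)).card := by
          apply Finset.card_le_card
          intro w hw
          rw [Finset.mem_filter] at hw ⊢
          exact ⟨hw.1, hFF w hw.1 hw.2⟩
        simp only [ne_eq]
        simp only [decide_eq_false_iff_not, not_not]
        omega
      · rw [hβ] at hvr
        have hP : ¬ ((outNbrs E v).filter (fun w => myBOf E bprev ℓ X w = true)).card
            < ((outNbrs E v).filter (fun w => myBOf E bprev ℓ X w = false)).card := by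
          simpa using hvr
        have hTT : ∀ w ∈ outNbrs E v,
            myBOf E bprev ℓ X w = true → myBOf E bprev ℓ Y w = true := by
          intro w hw hb
          by_cases hLw : myL E w = ℓ
          · have hβw : myBeta E w = false := by rw [hkey w hw hLw, hβ]; rfl
            simp only [myBOf, if_pos hLw, hβw] at hb ⊢
            have hmy : w ∈ X := by simpa using hb
            have : w ∈ Y := hXY hmy
            simpa using this
          · simp only [myBOf, if_neg hLw] at hb ⊢
            exact hb
        have hFF : ∀ w ∈ outNbrs E v,
            myBOf E bprev ℓ Y w = false → myBOf E bprev ℓ X w = false := by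
          intro w hw hb
          by_cases hLw : myL E w = ℓ
          · have hβw : myBeta E w = false := by rw [hkey w hw hLw, hβ]; rfl
            simp only [myBOf, if_pos hLw, hβw] at hb ⊢
            have hny : w ∉ Y := by simpa using hb
            have hnx : w ∉ X := fun hx => hny (hXY hx)
            simpa using hnx
          · simp only [myBOf, if_neg hLw] at hb ⊢
            exact hb
        have hc1 : ((outNbrs E v).filter (fun w => myBOf E bprev ℓ X w = true)).card
            ≤ ((outNbrs E v).filter (fun w => myBOf E bprev ℓ Y w = true)).card := by
          apply Finset.card_le_card
          intro w hw
          rw [Finset.mem_filter] at hw ⊢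
          exact ⟨hw.1, hTT w hw.1 hw.2⟩
        have hc2 : ((outNbrs E v).filter (fun w => myBOf E bprev ℓ Y w = false)).card
            ≤ ((outNbrs E v).filter (fun w => myBOf E bprev ℓ X w = false)).card := by
          apply Finset.card_le_card
          intro w hw
          rw [Finset.mem_filter] at hw ⊢
          exact ⟨hw.1, hFF w hw.1 hw.2⟩
        simp only [ne_eq, decide_eq_true_eq]
        omega
  set H : Set V →o Set V := ⟨fun X => {v | myL E v = ℓ ∧
      myResp E pb (myBOf E bprev ℓ X) v ≠ myBeta E v}, hmono⟩ with hH
  set X := H.lfp with hXdef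
  have hfix : H X = X := H.map_lfp
  refine ⟨myBOf E bprev ℓ X, ?_⟩
  intro v hv
  by_cases hvL : myL E v = ℓ
  · have hmem2 : v ∈ X ↔ myResp E pb (myBOf E bprev ℓ X) v ≠ myBeta E v := by
      constructor
      · intro hx
        rw [← hfix] at hx
        exact hx.2
      · intro hne
        rw [← hfix]
        exact ⟨hvL, hne⟩
    have hvfix : myBOf E bprev ℓ X v = myResp E pb (myBOf E bprev ℓ X) v := by
      simp only [myBOf, if_pos hvL]
      by_cases hx : v ∈ X
      · have hne := hmem2.mp hx
        have hd : decide (v ∈ X) = true := by simpa using hx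
        rw [hd]
        cases hβ : myBeta E v <;> cases hr : myResp E pb (myBOf E bprev ℓ X) v <;> simp_all
      · have heq : myResp E pb (myBOf E bprev ℓ X) v = myBeta E v := by
          by_contra hne
          exact hx (hmem2.mpr hne)
        have hd : decide (v ∈ X) = false := by simpa using hx
        rw [hd, heq]
        cases myBeta E v <;> rfl
    exact myResp_good E pb _ v hvfix
  · have hvlt : myL E v < ℓ := by omega
    have hg := hprev v hvlt
    have hbv : myBOf E bprev ℓ X v = bprev v := by simp only [myBOf, if_neg hvL]
    have hfil : (outNbrs E v).filter (fun w => myBOf E bprev ℓ X w = myBOf E bprev ℓ X v)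
        = (outNbrs E v).filter (fun w => bprev w = bprev v) := by
      apply Finset.filter_congr
      intro w hw
      have hE := houtE v w hw
      have hLw : myL E w ≠ ℓ := by have := myL_le hE; omega
      simp only [myBOf, if_neg hLw, if_neg hvL]
    constructor
    · rw [hfil]
      exact hg.1
    · intro hsink
      rw [hbv]
      exact hg.2 hsink

lemma myMain {E : V → V → Prop} (hloop : ∀ v, ¬ E v v)
    (hodd : ¬ ∃ l : List V, IsDiCycle E l ∧ Odd l.length) (pb : V → Bool) :
    ∀ ℓ : ℕ, ∃ b : V → Bool, ∀ v, myL E v < ℓ → myGood E pb b v := by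
  intro ℓ
  induction ℓ with
  | zero => exact ⟨fun _ => true, fun v hv => absurd hv (by omega)⟩
  | succ n ih =>
    obtain ⟨bprev, hprev⟩ := ih
    exact myStep hloop hodd pb n bprev hprev

end AuxiliaryMajority

/-- If a digraph contains no directed cycle of odd length,
then any pre-coloring of its sinks with colors from `{1,2}` extends to a
majority coloring of the whole digraph with colors `{1,2}`. -/
theorem majority_two_coloring_extending_sinks
    {V : Type*} [Fintype V] (E : V → V → Prop) (hloopless : ∀ v : V, ¬ E v v)
    (hodd : ¬ ∃ l : List V, IsDiCycle E l ∧ Odd l.length)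
    (p : V → Fin 2) :
    ∃ c : V → Fin 2, IsMajorityColoring E c ∧
      ∀ v : V, outNbrs E v = ∅ → c v = p v := by
  classical
  set pb : V → Bool := fun v => decide (p v = 1) with hpb
  obtain ⟨b, hb⟩ := myMain hloopless hodd pb (Fintype.card V + 1)
  have hball : ∀ v, myGood E pb b v := fun v => hb v (by have := myL_le_card E v; omega)
  refine ⟨fun v => if b v then 1 else 0, ?_, ?_⟩
  · intro v
    have hg := (hball v).1
    beta_reduce
    convert hg using 3
    ext w
    simp only [Finset.mem_filter]
    refine and_congr_right fun _ => ?_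
    cases hbw : b w <;> cases hbv : b v <;> simp [hbw, hbv]
  · intro v hsink
    have h2 := (hball v).2 hsink
    by_cases hb1 : p v = 1
    · have hbt : b v = true := by rw [h2, hpb]; simp [hb1]
      simp [hbt, hb1]
    · have hp0 : p v = 0 := by
        have hlt := (p v).isLt
        have hne : (p v).val ≠ 1 := fun h => hb1 (Fin.ext h)
        exact Fin.ext (by omega)
      have hbf : b v = false := by rw [h2, hpb]; simp [hb1]
      simp [hbf, hp0]
end

section
/- Every digraph without directed cycles of odd length is majority 2-choosable. -/
open scoped Classical

variable {V : Type*} [Fintype V]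

/-!
Pick two colours `x v < y v` from every list. Colour a sink strong component `C` of the
uncoloured vertices first and recurse on the rest, so that out-neighbours outside `C` are already
coloured when `C` is. As `C` is strongly connected and has no odd directed cycle, all walks
between two of its vertices have the same length parity; hence `C` splits into two sides with
every edge of `C` crossing. Offering one side the ordered pair `(x, y)` and the other `(y, x)`,
no edge joins two vertices offered the same ordered pair, and a Knaster–Tarski fixed point then
chooses a colour from each pair so that every vertex of `C` has at most half of its out-neighbours
in its own colour.
-/

open Finset Relation

omit [Fintype V] in
theorem IsDiCycle.mono {E F : V → V → Prop} (hFE : ∀ a b, F a b → E a b) {l : List V}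
    (h : IsDiCycle F l) : IsDiCycle E l := by
  obtain ⟨hne, hnd, hchain, a, b, ha, hb, hba⟩ := h
  exact ⟨hne, hnd, hchain.imp hFE, a, b, ha, hb, hFE b a hba⟩

theorem List.exists_eq_append_cons_append_cons_of_not_nodup_s3 {α : Type*} {l : List α}
    (h : ¬ l.Nodup) : ∃ x l₁ l₂ l₃, l = l₁ ++ x :: (l₂ ++ x :: l₃) := by
  obtain ⟨x, hx⟩ : ∃ x, List.Sublist [x, x] l := by simpa [List.nodup_iff_sublist] using h
  obtain ⟨r₁, r₂, rfl, hx₁, hx₂⟩ := List.cons_sublist_iff.1 hx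
  obtain ⟨l₁, l₂, rfl⟩ := List.append_of_mem hx₁
  obtain ⟨l₂', l₃, rfl⟩ := List.append_of_mem (List.singleton_sublist.1 hx₂)
  exact ⟨x, l₁, l₂ ++ l₂', l₃, by simp⟩

omit [Fintype V] in
/-- Closed walks are written `v :: l` with `l` ending in `v`, so that `l.length` is the
number of edges. -/
theorem exists_odd_dicycle_of_odd_closed_walk {E : V → V → Prop} {v : V} {l : List V}
    (hchain : (v :: l).IsChain E) (hlast : (v :: l).getLast (List.cons_ne_nil v l) = v)
    (hodd : Odd l.length) : ∃ c, IsDiCycle E c ∧ Odd c.length := by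
  induction hn : l.length using Nat.strong_induction_on generalizing v l with
  | _ n ih =>
  by_cases hnd : l.Nodup
  · obtain ⟨a, t, rfl⟩ := List.exists_cons_of_length_pos hodd.pos
    refine ⟨a :: t, ⟨List.cons_ne_nil a t, hnd, hchain.tail, a, v, rfl, ?_,
      (List.isChain_cons_cons.1 hchain).1⟩, hodd⟩
    simpa [List.getLast?_eq_some_getLast] using hlast
  obtain ⟨x, l₁, l₂, l₃, rfl⟩ := List.exists_eq_append_cons_append_cons_of_not_nodup_s3 hnd
  rw [List.isChain_cons_split, List.isChain_cons_split (l₁ := l₂)] at hchain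
  have hloop : (x :: (l₂ ++ [x])).IsChain E := hchain.2.1
  have hrest : (v :: (l₁ ++ x :: l₃)).IsChain E := List.isChain_cons_split.2 ⟨hchain.1, hchain.2.2⟩
  have hlen : (l₂ ++ [x]).length + (l₁ ++ x :: l₃).length = n := by
    simp only [← hn, List.length_append, List.length_cons, List.length_nil]; omega
  rcases Nat.even_or_odd (l₂ ++ [x]).length with heven | hodd'
  · refine ih _ (by simp at hlen ⊢; omega) hrest (by simpa using hlast) ?_ rfl
    rw [hn, ← hlen] at hodd
    exact (Nat.odd_add'.1 hodd).2 heven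
  · exact ih _ (by simp at hlen ⊢; omega) hloop (by simp) hodd' rfl

/-- The bipartite double cover of `E`: a walk from `(u, i)` to `(w, j)` in it is an `E`-walk from
`u` to `w` of length congruent to `i + j` mod 2. -/
def doubleCover (E : V → V → Prop) (p q : V × Bool) : Prop :=
  E p.1 q.1 ∧ q.2 = !p.2

section DoubleCover

variable {E : V → V → Prop}

omit [Fintype V] in
theorem Relation.ReflTransGen.exists_doubleCover {u w : V} (h : ReflTransGen E u w) (i : Bool) :
    ∃ j, ReflTransGen (doubleCover E) (u, i) (w, j) := by
  induction h with
  | refl => exact ⟨i, .refl⟩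
  | tail _ huw ih =>
    obtain ⟨j, hj⟩ := ih
    exact ⟨!j, hj.tail ⟨huw, rfl⟩⟩

omit [Fintype V] in
theorem Relation.ReflTransGen.doubleCover_not {u w : V} {i j : Bool}
    (h : ReflTransGen (doubleCover E) (u, i) (w, j)) :
    ReflTransGen (doubleCover E) (u, !i) (w, !j) :=
  ReflTransGen.lift (fun p : V × Bool => (p.1, !p.2))
    (fun _ _ hpq => ⟨hpq.1, by simp [hpq.2]⟩) _ _ h

omit [Fintype V] in
theorem Relation.ReflTransGen.exists_isChain_of_doubleCover {p q : V × Bool}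
    (h : ReflTransGen (doubleCover E) p q) :
    ∃ l : List V, (p.1 :: l).IsChain E ∧ (p.1 :: l).getLast (List.cons_ne_nil _ _) = q.1 ∧
      (Even l.length ↔ p.2 = q.2) := by
  induction h using ReflTransGen.head_induction_on with
  | refl => exact ⟨[], .singleton _, rfl, by simp⟩
  | head hpp' _ ih =>
    obtain ⟨l, hchain, hlast, hparity⟩ := ih
    refine ⟨_ :: l, hchain.cons_cons hpp'.1, by simpa using hlast, ?_⟩
    rw [List.length_cons, Nat.even_add_one, hparity, hpp'.2]
    cases p.2 <;> cases q.2 <;> simp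

omit [Fintype V] in
theorem eq_of_reflTransGen_doubleCover (hodd : ¬ ∃ l : List V, IsDiCycle E l ∧ Odd l.length)
    {v : V} {i j : Bool} (h : ReflTransGen (doubleCover E) (v, i) (v, j)) : i = j := by
  obtain ⟨l, hchain, hlast, hparity⟩ := h.exists_isChain_of_doubleCover
  by_contra hij
  exact hodd (exists_odd_dicycle_of_odd_closed_walk hchain hlast
    (Nat.not_even_iff_odd.1 (mt hparity.1 hij)))

end DoubleCover

theorem exists_mem_forall_reflTransGen_symm {F : V → V → Prop} {S : Finset V}
    (hS : S.Nonempty) (hF : ∀ a b, F a b → b ∈ S) :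
    ∃ v₀ ∈ S, ∀ u, ReflTransGen F v₀ u → ReflTransGen F u v₀ := by
  obtain ⟨v₀, hv₀, hmin⟩ :=
    S.exists_min_image (fun v => #(univ.filter (ReflTransGen F v))) hS
  refine ⟨v₀, hv₀, fun u hu => ?_⟩
  have huS : u ∈ S := by
    rcases hu.cases_tail with rfl | ⟨_, _, hF'⟩
    exacts [hv₀, hF _ _ hF']
  have hsub : univ.filter (ReflTransGen F u) ⊆ univ.filter (ReflTransGen F v₀) := by
    intro w hw
    simp only [mem_filter, mem_univ, true_and] at hw ⊢
    exact hu.trans hw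
  have hv₀u : v₀ ∈ univ.filter (ReflTransGen F u) := by
    rw [eq_of_subset_of_card_le hsub (hmin u huS)]
    exact mem_filter.2 ⟨mem_univ _, .refl⟩
  simpa using hv₀u

theorem exists_bipartite_sink_subset {E : V → V → Prop}
    (hodd : ¬ ∃ l : List V, IsDiCycle E l ∧ Odd l.length) {S : Finset V} (hS : S.Nonempty) :
    ∃ C ⊆ S, C.Nonempty ∧ (∀ u ∈ C, ∀ w ∈ S, E u w → w ∈ C) ∧
      ∃ p : V → Bool, ∀ u ∈ C, ∀ w ∈ C, E u w → p w = !p u := by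
  set F : V → V → Prop := fun a b => E a b ∧ b ∈ S
  have hoddF : ¬ ∃ l : List V, IsDiCycle F l ∧ Odd l.length :=
    fun ⟨l, hl, hl'⟩ => hodd ⟨l, hl.mono fun _ _ h => h.1, hl'⟩
  obtain ⟨v₀, hv₀, hback⟩ := exists_mem_forall_reflTransGen_symm hS (F := F) fun _ _ h => h.2
  set C := S.filter (ReflTransGen F v₀)
  have hparity : ∀ w ∈ C, ∃ j, ReflTransGen (doubleCover F) (v₀, false) (w, j) :=
    fun w hw => (mem_filter.1 hw).2.exists_doubleCover false
  choose! p hp using hparity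
  refine ⟨C, filter_subset _ _, ⟨v₀, mem_filter.2 ⟨hv₀, .refl⟩⟩, ?_, p, ?_⟩
  · intro u hu w hw huw
    simp only [C, mem_filter] at hu ⊢
    exact ⟨hw, hu.2.tail ⟨huw, hw⟩⟩
  · intro u hu w hw huw
    obtain ⟨k, hk⟩ := (hback w (mem_filter.1 hw).2).exists_doubleCover (p w)
    have hreach : ReflTransGen (doubleCover F) (v₀, false) (w, !p u) :=
      (hp u hu).tail ⟨⟨huw, (mem_filter.1 hw).1⟩, rfl⟩
    by_contra hne
    -- `v₀ ⇝ w ⇝ v₀` and `v₀ ⇝ u → w ⇝ v₀` would be closed walks of different parities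
    have h₁ := eq_of_reflTransGen_doubleCover hoddF ((hp w hw).trans hk)
    have h₂ := eq_of_reflTransGen_doubleCover hoddF
      (hreach.trans (by simpa [Bool.eq_not.2 hne] using hk.doubleCover_not))
    exact Bool.not_ne_self k (h₂.symm.trans h₁)

def IsMajorityAt {α : Type*} (E : V → V → Prop) (c : V → α) (v : V) : Prop :=
  2 * #((outNbrs E v).filter (fun w => c w = c v)) ≤ #(outNbrs E v)

theorem IsMajorityAt.congr {α : Type*} {E : V → V → Prop} {c c' : V → α} {v : V}
    (h : IsMajorityAt E c v) (hv : c v = c' v) (hN : ∀ w ∈ outNbrs E v, c w = c' w) :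
    IsMajorityAt E c' v := by
  have hfilter : (outNbrs E v).filter (fun w => c w = c v) =
      (outNbrs E v).filter (fun w => c' w = c' v) :=
    filter_congr fun w hw => by rw [hN w hw, hv]
  rwa [IsMajorityAt, hfilter] at h

/-- Vertices with `a v = b v` are precoloured. The set `s` of vertices taking their `a`-colour is a
fixed point (Knaster–Tarski) of the monotone operator selecting the vertices with at most half of
their out-neighbours threatening the colour `a v`. -/
theorem exists_isMajorityAt_piecewise {α : Type*} (E : V → V → Prop) (a b : V → α)
    (hab : ∀ u w, E u w → a u = a w → b u = b w → a u = b u) :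
    ∃ s : Set V, ∀ v, a v ≠ b v → IsMajorityAt E (s.piecewise a b) v := by
  -- `w` threatens `a v` if `a w = a v`, or if `w ∉ s` and `b w = a v`: an over-approximation of the
  -- out-neighbours sharing the colour `a v`, antitone in `s`
  let IsThreat (s : Set V) (v w : V) : Prop := a w = a v ∨ (w ∉ s ∧ b w = a v)
  let threats (s : Set V) (v : V) : Finset V := (outNbrs E v).filter (IsThreat s v)
  let T : Set V →o Set V :=
    { toFun := fun s => {v | 2 * #(threats s v) ≤ #(outNbrs E v)}
      monotone' := fun s t hst v (hv : 2 * #(threats s v) ≤ _) => by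
        refine le_trans (Nat.mul_le_mul_left 2 (card_le_card fun w => ?_)) hv
        simp only [threats, IsThreat, mem_filter]
        exact fun ⟨hw, h⟩ => ⟨hw, h.imp_right fun h' => ⟨fun hws => h'.1 (hst hws), h'.2⟩⟩ }
  set s := OrderHom.lfp T
  have hfix : ∀ v, v ∈ s ↔ 2 * #(threats s v) ≤ #(outNbrs E v) := fun v =>
    (Set.ext_iff.1 (OrderHom.map_lfp T) v).symm
  refine ⟨s, fun v hv => ?_⟩
  unfold IsMajorityAt
  by_cases hvs : v ∈ s
  · refine le_trans (Nat.mul_le_mul_left 2 (card_le_card fun w => ?_)) ((hfix v).1 hvs)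
    simp only [threats, IsThreat, mem_filter, Set.piecewise, hvs, if_true]
    rintro ⟨hw, hcw⟩
    by_cases hws : w ∈ s
    · simp only [hws, if_true] at hcw
      exact ⟨hw, .inl hcw⟩
    · simp only [hws, if_false] at hcw
      exact ⟨hw, .inr ⟨hws, hcw⟩⟩
  · have hsame : (outNbrs E v).filter (fun w => s.piecewise a b w = s.piecewise a b v) ⊆
        (outNbrs E v).filter (fun w => ¬ IsThreat s v w) := by
      intro w
      simp only [IsThreat, mem_filter, Set.piecewise, hvs, if_false]
      rintro ⟨hw, hcw⟩
      refine ⟨hw, ?_⟩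
      by_cases hws : w ∈ s
      · simp only [hws, if_true] at hcw
        rintro (h | ⟨h, -⟩)
        exacts [hv (h ▸ hcw), h hws]
      · simp only [hws, if_false] at hcw
        rintro (h | ⟨-, h⟩)
        · exact hv (hab v w (by simpa [outNbrs] using hw) h.symm hcw.symm)
        · exact hv (h ▸ hcw)
    have hsplit : #(threats s v) + #((outNbrs E v).filter (fun w => ¬ IsThreat s v w)) =
        #(outNbrs E v) :=
      card_filter_add_card_filter_not _
    have := card_le_card hsame
    have := (hfix v).not.1 hvs
    omega

section Extension

variable {α : Type*} [LinearOrder α] {E : V → V → Prop} (x y : V → α)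

theorem exists_extension_isMajorityAt_of_bipartite (hxy : ∀ v, x v < y v) (C : Finset V)
    (p : V → Bool) (hp : ∀ u ∈ C, ∀ w ∈ C, E u w → p w = !p u) (c₀ : V → α) :
    ∃ c : V → α, (∀ v ∈ C, c v = x v ∨ c v = y v) ∧ (∀ v ∉ C, c v = c₀ v) ∧
      ∀ v ∈ C, IsMajorityAt E c v := by
  -- the two sides of `C` are offered their pairs in opposite orders
  let a v := if v ∈ C then (if p v then x v else y v) else c₀ v
  let b v := if v ∈ C then (if p v then y v else x v) else c₀ v
  have hab : ∀ u w, E u w → a u = a w → b u = b w → a u = b u := by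
    intro u w huw hau hbu
    by_cases hu : u ∈ C
    · by_cases hw : w ∈ C
      · have hpw := hp u hu w hw huw
        have hxu := hxy u
        have hxw := hxy w
        cases hpu : p u <;> simp [a, b, hu, hw, hpu, hpw] at hau hbu <;> order
      · simp_all [a, b]
    · simp [a, b, hu]
  obtain ⟨s, hs⟩ := exists_isMajorityAt_piecewise E a b hab
  refine ⟨s.piecewise a b, fun v hv => ?_, fun v hv => ?_, fun v hv => hs v ?_⟩
  · by_cases hvs : v ∈ s <;> cases hpv : p v <;> simp [Set.piecewise, a, b, hv, hvs, hpv]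
  · by_cases hvs : v ∈ s <;> simp [Set.piecewise, a, b, hv, hvs]
  · cases hpv : p v <;> simp [a, b, hv, hpv, (hxy v).ne, (hxy v).ne']

theorem exists_extension_isMajorityAt (hodd : ¬ ∃ l : List V, IsDiCycle E l ∧ Odd l.length)
    (hxy : ∀ v, x v < y v) (S : Finset V) (c₀ : V → α) :
    ∃ c : V → α, (∀ v ∈ S, c v = x v ∨ c v = y v) ∧ (∀ v ∉ S, c v = c₀ v) ∧
      ∀ v ∈ S, IsMajorityAt E c v := by
  induction S using Finset.strongInduction generalizing c₀ with
  | _ S ih =>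
  rcases S.eq_empty_or_nonempty with rfl | hS
  · exact ⟨c₀, by simp, fun _ _ => rfl, by simp⟩
  obtain ⟨C, hCS, hCne, hsink, p, hp⟩ := exists_bipartite_sink_subset hodd hS
  obtain ⟨c₁, hc₁xy, hc₁, hc₁maj⟩ := exists_extension_isMajorityAt_of_bipartite x y hxy C p hp c₀
  obtain ⟨c, hcxy, hc, hcmaj⟩ := ih (S \ C) (sdiff_ssubset hCS hCne) c₁
  have hcc₁ : ∀ v, v ∈ C ∨ v ∉ S → c v = c₁ v := fun v hv => hc v (by rw [mem_sdiff]; tauto)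
  refine ⟨c, fun v hv => ?_, fun v hv => ?_, fun v hv => ?_⟩
  · by_cases hvC : v ∈ C
    · exact hcc₁ v (.inl hvC) ▸ hc₁xy v hvC
    · exact hcxy v (mem_sdiff.2 ⟨hv, hvC⟩)
  · rw [hcc₁ v (.inr hv), hc₁ v fun h => hv (hCS h)]
  · by_cases hvC : v ∈ C
    · refine (hc₁maj v hvC).congr (hcc₁ v (.inl hvC)).symm fun w hw => (hcc₁ w ?_).symm
      by_cases hwS : w ∈ S
      · exact .inl (hsink v hvC w hwS (by simpa [outNbrs] using hw))
      · exact .inr hwS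
    · exact hcmaj v (mem_sdiff.2 ⟨hv, hvC⟩)

end Extension

theorem majority_two_choosable_of_no_odd_dicycle_general
    {V : Type*} [Fintype V] (E : V → V → Prop)
    (hodd : ¬ ∃ l : List V, IsDiCycle E l ∧ Odd l.length) :
    MajorityChoosable E 2 := by
  intro L hL
  have hne : ∀ v, (L v).Nonempty := fun v => card_pos.1 (by have := hL v; omega)
  obtain ⟨c, hcL, -, hc⟩ := exists_extension_isMajorityAt (fun v => (L v).min' (hne v))
    (fun v => (L v).max' (hne v)) hodd (fun v => min'_lt_max'_of_card _ (hL v)) univ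
    (fun v => (L v).min' (hne v))
  refine ⟨c, fun v => ?_, fun v => hc v (mem_univ v)⟩
  rcases hcL v (mem_univ v) with h | h <;> rw [h]
  exacts [min'_mem _ _, max'_mem _ _]

/-- Every digraph without directed cycles of odd length is
majority `2`-choosable. -/
theorem majority_two_choosable_of_no_odd_dicycle
    {V : Type*} [Fintype V] (E : V → V → Prop) (hloopless : ∀ v : V, ¬ E v v)
    (hodd : ¬ ∃ l : List V, IsDiCycle E l ∧ Odd l.length) :
    MajorityChoosable E 2 :=
  majority_two_choosable_of_no_odd_dicycle_general E hodd
end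

section
/- Let D be a digraph with dichromatic number at most 3. Then D admits a majority coloring with 3 colors. -/
open scoped Classical

variable {V : Type*} [Fintype V]

section Helpers

variable {α : Type*} {β : Type*}

private lemma exists_dup_split {l : List α} (h : ¬ l.Nodup) :
    ∃ (xs : List α) (a : α) (ys zs : List α), l = xs ++ a :: (ys ++ a :: zs) := by
  induction l with
  | nil => simp at h
  | cons b t ih =>
    by_cases hb : b ∈ t
    · obtain ⟨s, u, rfl⟩ := List.append_of_mem hb
      exact ⟨[], b, s, u, rfl⟩
    · have ht : ¬ t.Nodup := fun hn => h (List.nodup_cons.mpr ⟨hb, hn⟩)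
      obtain ⟨xs, a, ys, zs, rfl⟩ := ih ht
      exact ⟨b :: xs, a, ys, zs, rfl⟩

private lemma chain'_of_infix {r : α → α → Prop} {s m t : List α}
    (h : (s ++ m ++ t).Chain' r) : m.Chain' r := by
  rw [List.Chain', List.isChain_append] at h
  rw [List.isChain_append] at h
  exact h.1.2.1

private lemma chain_const {f : α → β} : ∀ (l : List α),
    l.Chain' (fun u w => f u = f w) → ∀ a, l.head? = some a → ∀ u ∈ l, f u = f a := by
  intro l
  induction l with
  | nil => simp
  | cons b t ih =>
    intro hch a ha u hu
    rw [List.head?_cons, Option.some_inj] at ha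
    subst ha
    rcases List.mem_cons.mp hu with rfl | hu'
    · rfl
    · cases t with
      | nil => simp at hu'
      | cons d t' =>
        obtain ⟨hbd, hch'⟩ := List.isChain_cons_cons.mp hch
        rw [ih hch' d rfl u hu']
        exact hbd.symm

private lemma closed_chain_shrink (r : α → α → Prop) :
    ∀ n (l : List α), l.length ≤ n → l ≠ [] → l.Chain' r →
      (∃ a b, l.head? = some a ∧ l.getLast? = some b ∧ r b a) →
      ∃ m : List α, m ≠ [] ∧ m.Nodup ∧ m.Chain' r ∧
        ∃ a b, m.head? = some a ∧ m.getLast? = some b ∧ r b a := by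
  intro n
  induction n with
  | zero =>
    intro l hlen hne _ _
    exact absurd (List.length_eq_zero_iff.mp (Nat.le_zero.mp hlen)) hne
  | succ n ih =>
    intro l hlen hne hch hcl
    by_cases hnd : l.Nodup
    · exact ⟨l, hne, hnd, hch, hcl⟩
    · obtain ⟨xs, a, ys, zs, rfl⟩ := exists_dup_split hnd
      apply ih (a :: ys)
      · have := hlen
        simp only [List.length_append, List.length_cons] at this ⊢
        omega
      · simp
      · have heq : xs ++ a :: (ys ++ a :: zs) = xs ++ (a :: ys) ++ (a :: zs) := by simp
        rw [heq] at hch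
        exact chain'_of_infix hch
      · have h2 : xs ++ a :: (ys ++ a :: zs) = xs ++ ((a :: ys) ++ [a]) ++ zs := by simp
        rw [h2] at hch
        have hch2 : ((a :: ys) ++ [a]).Chain' r := chain'_of_infix hch
        rw [List.Chain', List.isChain_append] at hch2
        obtain ⟨b, hb⟩ : ∃ b, (a :: ys).getLast? = some b := by
          cases h : (a :: ys).getLast? with
          | none => simp [List.getLast?_eq_none_iff] at h
          | some b => exact ⟨b, rfl⟩
        exact ⟨a, b, rfl, hb, hch2.2.2 b hb a rfl⟩

private lemma walk_of_transGen {r : α → α → Prop} {a b : α}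
    (h : Relation.TransGen (flip r) a b) :
    ∃ l : List α, 2 ≤ l.length ∧ l.Chain' r ∧ l.head? = some b ∧ l.getLast? = some a := by
  induction h with
  | single h1 =>
    rename_i c
    exact ⟨[c, a], by simp, List.isChain_pair.mpr h1, rfl, rfl⟩
  | tail hab hbc ih =>
    rename_i b' c
    obtain ⟨l, hlen, hch, hhead, hlast⟩ := ih
    refine ⟨c :: l, by simp; omega, ?_, rfl, ?_⟩
    · refine List.isChain_cons.mpr ⟨?_, hch⟩
      intro y hy
      rw [hhead, Option.mem_def, Option.some_inj] at hy
      subst hy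
      exact hbc
    · cases l with
      | nil => simp at hlen
      | cons x xs => rw [List.getLast?_cons_cons]; exact hlast

end Helpers

private def sameRel (E : V → V → Prop) (f : V → Fin 3) : V → V → Prop :=
  fun u w => E u w ∧ f u = f w

private lemma wf_sameRel (E : V → V → Prop) (f : V → Fin 3)
    (hf : ∀ l : List V, IsDiCycle E l → ¬ MonochromaticList f l) :
    WellFounded (flip (sameRel E f)) := by
  have key : ∀ v, ¬ Relation.TransGen (flip (sameRel E f)) v v := by
    intro v hv
    obtain ⟨l, hlen, hch, hhead, hlast⟩ := walk_of_transGen hv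
    obtain ⟨m, rfl⟩ : ∃ m, l = m ++ [v] := by
      rcases List.eq_nil_or_concat l with rfl | ⟨m, y, rfl⟩
      · simp at hlen
      · refine ⟨m, ?_⟩
        simp only [List.concat_eq_append] at hlast ⊢
        rw [List.getLast?_concat] at hlast
        rw [Option.some_inj] at hlast
        rw [hlast]
    have hm : m ≠ [] := by rintro rfl; simp at hlen
    rw [List.Chain', List.isChain_append] at hch
    obtain ⟨hchm, -, hlink⟩ := hch
    have hheadm : m.head? = some v := by
      cases m with
      | nil => exact absurd rfl hm
      | cons a t => simpa using hhead
    obtain ⟨b, hb⟩ : ∃ b, m.getLast? = some b := by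
      cases h : m.getLast? with
      | none => rw [List.getLast?_eq_none_iff] at h; exact absurd h hm
      | some b => exact ⟨b, rfl⟩
    have hrb : sameRel E f b v := hlink b hb v rfl
    obtain ⟨m', hne, hnd, hch', a', b', hh, hl, hr⟩ :=
      closed_chain_shrink (sameRel E f) m.length m le_rfl hm hchm ⟨v, b, hheadm, hb, hrb⟩
    refine hf m' ⟨hne, hnd, List.IsChain.imp (fun a b h => h.1) hch', a', b', hh, hl, hr.1⟩ ?_
    have hchf : m'.Chain' (fun u w => f u = f w) :=
      List.IsChain.imp (fun a b h => h.2) hch'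
    intro u hu w hw
    rw [chain_const m' hchf a' hh u hu, chain_const m' hchf a' hh w hw]
  haveI : IsTrans V (Relation.TransGen (flip (sameRel E f))) :=
    ⟨fun _ _ _ h1 h2 => h1.trans h2⟩
  haveI : IsIrrefl V (Relation.TransGen (flip (sameRel E f))) := ⟨key⟩
  exact Subrelation.wf (fun h => Relation.TransGen.single h)
    (Finite.wellFounded_of_trans_of_irrefl _)

private noncomputable def xfun (E : V → V → Prop) (f : V → Fin 3)
    (hwf : WellFounded (flip (sameRel E f))) : V → Bool :=
  hwf.fix (fun v ih =>
    decide (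
      ((outNbrs E v).filter (fun w => f w = f v ∧
        (if h : flip (sameRel E f) w v then ih w h else false) = true)).card
      + ((outNbrs E v).filter (fun w => f w = f v + 1)).card
      ≤ ((outNbrs E v).filter (fun w => f w = f v ∧
        (if h : flip (sameRel E f) w v then ih w h else false) = false)).card
      + ((outNbrs E v).filter (fun w => f w = f v + 2)).card))

private lemma mem_outNbrs {E : V → V → Prop} {v w : V} :
    w ∈ outNbrs E v ↔ E v w := by
  simp [outNbrs]

private lemma xfun_eq (E : V → V → Prop) (f : V → Fin 3)
    (hwf : WellFounded (flip (sameRel E f))) (v : V) :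
    xfun E f hwf v =
    decide (
      ((outNbrs E v).filter (fun w => f w = f v ∧ xfun E f hwf w = true)).card
      + ((outNbrs E v).filter (fun w => f w = f v + 1)).card
      ≤ ((outNbrs E v).filter (fun w => f w = f v ∧ xfun E f hwf w = false)).card
      + ((outNbrs E v).filter (fun w => f w = f v + 2)).card) := by
  have hcongr : ∀ b : Bool,
      (outNbrs E v).filter (fun w => f w = f v ∧
        (if h : flip (sameRel E f) w v then xfun E f hwf w else false) = b)
      = (outNbrs E v).filter (fun w => f w = f v ∧ xfun E f hwf w = b) := by
    intro b
    apply Finset.filter_congr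
    intro w hw
    by_cases hfw : f w = f v
    · have hr : flip (sameRel E f) w v := ⟨mem_outNbrs.mp hw, hfw.symm⟩
      rw [dif_pos hr]
    · simp [hfw]
  have hfix2 : xfun E f hwf v =
    decide (
      ((outNbrs E v).filter (fun w => f w = f v ∧
        (if h : flip (sameRel E f) w v then xfun E f hwf w else false) = true)).card
      + ((outNbrs E v).filter (fun w => f w = f v + 1)).card
      ≤ ((outNbrs E v).filter (fun w => f w = f v ∧
        (if h : flip (sameRel E f) w v then xfun E f hwf w else false) = false)).card
      + ((outNbrs E v).filter (fun w => f w = f v + 2)).card) :=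
    WellFounded.fix_eq hwf _ v
  rw [hcongr true, hcongr false] at hfix2
  exact hfix2

/-- Every digraph with dichromatic number at most `3` (i.e.
whose vertex set can be partitioned into three parts each inducing no directed
cycle) has a majority coloring with `3` colors. -/
theorem majority_three_coloring_of_dichromatic_le_three
    {V : Type*} [Fintype V] (E : V → V → Prop) (hloopless : ∀ v : V, ¬ E v v)
    (hdichrom : ∃ f : V → Fin 3, ∀ l : List V, IsDiCycle E l →
      ¬ MonochromaticList f l) :
    ∃ c : V → Fin 3, IsMajorityColoring E c := by
  obtain ⟨f, hf⟩ := hdichrom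
  have hwf := wf_sameRel E f hf
  set x : V → Bool := xfun E f hwf with hxdef
  refine ⟨fun u => f u + (if x u = true then 1 else 0), fun v => ?_⟩
  have hspec := xfun_eq E f hwf v
  rw [← hxdef] at hspec
  have e1 : ((outNbrs E v).filter (fun w => f w = f v ∧ x w = true)).card
      + ((outNbrs E v).filter (fun w => f w = f v ∧ x w = false)).card
      = ((outNbrs E v).filter (fun w => f w = f v)).card := by
    have h := Finset.card_filter_add_card_filter_not
      (s := (outNbrs E v).filter (fun w => f w = f v)) (p := fun w => x w = true)
    rw [Finset.filter_filter, Finset.filter_filter] at h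
    have h2 : (outNbrs E v).filter (fun w => f w = f v ∧ ¬ x w = true)
        = (outNbrs E v).filter (fun w => f w = f v ∧ x w = false) := by
      apply Finset.filter_congr
      intro w _
      simp [Bool.not_eq_true]
    rw [h2] at h
    exact h
  have e2 : ((outNbrs E v).filter (fun w => f w = f v)).card
      + ((outNbrs E v).filter (fun w => ¬ f w = f v)).card = (outNbrs E v).card :=
    Finset.card_filter_add_card_filter_not
      (s := outNbrs E v) (p := fun w => f w = f v)
  have e3 : ((outNbrs E v).filter (fun w => ¬ f w = f v)).card
      = ((outNbrs E v).filter (fun w => f w = f v + 1)).card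
        + ((outNbrs E v).filter (fun w => f w = f v + 2)).card := by
    have h := Finset.card_filter_add_card_filter_not
      (s := (outNbrs E v).filter (fun w => ¬ f w = f v)) (p := fun w => f w = f v + 1)
    rw [Finset.filter_filter, Finset.filter_filter] at h
    have hP : (outNbrs E v).filter (fun w => ¬ f w = f v ∧ f w = f v + 1)
        = (outNbrs E v).filter (fun w => f w = f v + 1) := by
      apply Finset.filter_congr
      intro w _
      have h3 : ∀ a b : Fin 3, (¬ b = a ∧ b = a + 1) ↔ b = a + 1 := by decide
      exact h3 (f v) (f w)
    have hQ : (outNbrs E v).filter (fun w => ¬ f w = f v ∧ ¬ f w = f v + 1)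
        = (outNbrs E v).filter (fun w => f w = f v + 2) := by
      apply Finset.filter_congr
      intro w _
      have h3 : ∀ a b : Fin 3, (¬ b = a ∧ ¬ b = a + 1) ↔ b = a + 2 := by decide
      exact h3 (f v) (f w)
    rw [hP, hQ] at h
    exact h.symm
  have main : 2 * ((outNbrs E v).filter (fun w =>
      f w + (if x w = true then 1 else 0) = f v + (if x v = true then 1 else 0))).card
      ≤ (outNbrs E v).card := by
    cases hv : x v with
    | false =>
      rw [show (if (false : Bool) = true then (1 : Fin 3) else 0) = 0 from rfl, add_zero]
      have hsub : (outNbrs E v).filter (fun w =>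
          f w + (if x w = true then 1 else 0) = f v)
          ⊆ ((outNbrs E v).filter (fun w => f w = f v ∧ x w = false))
            ∪ ((outNbrs E v).filter (fun w => f w = f v + 2)) := by
        intro w hw'
        obtain ⟨hw, hcw⟩ := Finset.mem_filter.mp hw'
        rw [Finset.mem_union]
        cases hxw : x w with
        | false =>
          rw [hxw, show (if (false : Bool) = true then (1 : Fin 3) else 0) = 0 from rfl,
            add_zero] at hcw
          exact Or.inl (Finset.mem_filter.mpr ⟨hw, hcw, hxw⟩)
        | true =>
          rw [hxw, show (if (true : Bool) = true then (1 : Fin 3) else 0) = 1 from rfl] at hcw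
          have h2 : f w = f v + 2 := by
            have h3 : (f v + 2) + 1 = f v := by
              have h4 : ∀ a : Fin 3, a + 2 + 1 = a := by decide
              exact h4 (f v)
            rw [← h3] at hcw
            exact add_right_cancel hcw
          exact Or.inr (Finset.mem_filter.mpr ⟨hw, h2⟩)
      have hle := le_trans (Finset.card_le_card hsub) (Finset.card_union_le _ _)
      have hq : ¬ (((outNbrs E v).filter (fun w => f w = f v ∧ x w = true)).card
          + ((outNbrs E v).filter (fun w => f w = f v + 1)).card
          ≤ ((outNbrs E v).filter (fun w => f w = f v ∧ x w = false)).card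
          + ((outNbrs E v).filter (fun w => f w = f v + 2)).card) := by
        rw [hv] at hspec
        exact of_decide_eq_false hspec.symm
      omega
    | true =>
      rw [show (if (true : Bool) = true then (1 : Fin 3) else 0) = 1 from rfl]
      have hsub : (outNbrs E v).filter (fun w =>
          f w + (if x w = true then 1 else 0) = f v + 1)
          ⊆ ((outNbrs E v).filter (fun w => f w = f v ∧ x w = true))
            ∪ ((outNbrs E v).filter (fun w => f w = f v + 1)) := by
        intro w hw'
        obtain ⟨hw, hcw⟩ := Finset.mem_filter.mp hw'
        rw [Finset.mem_union]
        cases hxw : x w with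
        | true =>
          rw [hxw, show (if (true : Bool) = true then (1 : Fin 3) else 0) = 1 from rfl] at hcw
          exact Or.inl (Finset.mem_filter.mpr ⟨hw, add_right_cancel hcw, hxw⟩)
        | false =>
          rw [hxw, show (if (false : Bool) = true then (1 : Fin 3) else 0) = 0 from rfl,
            add_zero] at hcw
          exact Or.inr (Finset.mem_filter.mpr ⟨hw, hcw⟩)
      have hle := le_trans (Finset.card_le_card hsub) (Finset.card_union_le _ _)
      have hq : (((outNbrs E v).filter (fun w => f w = f v ∧ x w = true)).card
          + ((outNbrs E v).filter (fun w => f w = f v + 1)).card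
          ≤ ((outNbrs E v).filter (fun w => f w = f v ∧ x w = false)).card
          + ((outNbrs E v).filter (fun w => f w = f v + 2)).card) := by
        rw [hv] at hspec
        exact of_decide_eq_true hspec.symm
      omega
  convert main using 3
  congr!
end

section
/- Let D be a digraph whose underlying undirected graph is 6-choosable. Then D is majority 3-choosable. -/
open scoped Classical

variable {V : Type*} [Fintype V]

/-- The underlying simple graph of the digraph `(V, E)`:
`x` and `y` are adjacent iff `x ≠ y` and there is an edge between them in some direction. -/
def underGraph (E : V → V → Prop) : SimpleGraph V where
  Adj u v := u ≠ v ∧ (E u v ∨ E v u)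
  symm := ⟨fun _ _ h => ⟨h.1.symm, h.2.symm⟩⟩
  loopless := ⟨fun _ h => h.1 rfl⟩


/-!
Give every vertex `v` an ordered pair `(A v, B v)` of distinct colours from its list. A list of
size at least three offers at least six such pairs, so the `6`-choosability of the underlying
graph makes the pairs at the two ends of every arc different.

Now colour `v` by `B v` if `v` lies in a set `S` and by `A v` otherwise. Call `S` safe if every
`v ∈ S` has at most `d⁺(v)/2` out-neighbours that have colour `B v` or could get it by joining `S`.
Growing `S` can only remove such threats. If `v ∉ S` sees more than `d⁺(v)/2` out-neighbours
coloured `A v`, none of them threatens `B v`, because `A v ≠ B v` and the pair at `v` differs from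
the pair at each of its out-neighbours. So `insert v S` is again safe. A safe set of maximum size
therefore gives a majority colouring.
-/

open Finset

section SwitchSet

variable {α : Type*} (E : V → V → Prop) (A B : V → α)

/-- The out-neighbours of `v` that have colour `B v` under `S.piecewise B A`, or could get it
by joining `S`. -/
noncomputable def secondColorThreats (S : Finset V) (v : V) : Finset V :=
  (outNbrs E v).filter fun w => B w = B v ∨ (w ∉ S ∧ A w = B v)

def IsSafeSwitchSet (S : Finset V) : Prop :=
  ∀ v ∈ S, 2 * (secondColorThreats E A B S v).card ≤ (outNbrs E v).card

variable {E A B}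

lemma secondColorThreats_anti {S T : Finset V} (hST : S ⊆ T) (v : V) :
    secondColorThreats E A B T v ⊆ secondColorThreats E A B S v := by
  intro w hw
  simp only [secondColorThreats, mem_filter] at hw ⊢
  exact ⟨hw.1, hw.2.imp_right fun h => ⟨fun hwS => h.1 (hST hwS), h.2⟩⟩

lemma filter_piecewise_eq_subset_secondColorThreats {S : Finset V} {v : V} (hv : v ∈ S) :
    (outNbrs E v).filter (fun w => S.piecewise B A w = S.piecewise B A v) ⊆
      secondColorThreats E A B S v := by
  intro w hw
  rw [mem_filter, piecewise_eq_of_mem _ _ _ hv] at hw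
  refine mem_filter.2 ⟨hw.1, ?_⟩
  by_cases hwS : w ∈ S
  · exact Or.inl (by rw [piecewise_eq_of_mem _ _ _ hwS] at hw; exact hw.2)
  · exact Or.inr ⟨hwS, by rw [piecewise_eq_of_notMem _ _ _ hwS] at hw; exact hw.2⟩

lemma disjoint_secondColorThreats_filter_piecewise_eq {S : Finset V} {v : V}
    (hAB : A v ≠ B v) (hE : ∀ w, E v w → (A v, B v) ≠ (A w, B w)) :
    Disjoint (secondColorThreats E A B S v)
      ((outNbrs E v).filter fun w => S.piecewise B A w = A v) := by
  rw [disjoint_left]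
  intro w hw hw'
  simp only [secondColorThreats, outNbrs, mem_filter, mem_univ, true_and] at hw hw'
  by_cases hwS : w ∈ S
  · rw [piecewise_eq_of_mem _ _ _ hwS] at hw'
    exact hAB (hw'.2.symm.trans (hw.2.resolve_right fun h => h.1 hwS))
  · rw [piecewise_eq_of_notMem _ _ _ hwS] at hw'
    rcases hw.2 with hB | ⟨-, hA⟩
    · exact hE w hw.1 (by rw [hw'.2, hB])
    · exact hAB (hw'.2.symm.trans hA)

lemma IsSafeSwitchSet.insert {S : Finset V} (hS : IsSafeSwitchSet E A B S) {v : V}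
    (hAB : A v ≠ B v) (hE : ∀ w, E v w → (A v, B v) ≠ (A w, B w))
    (hbad : (outNbrs E v).card <
      2 * ((outNbrs E v).filter fun w => S.piecewise B A w = A v).card) :
    IsSafeSwitchSet E A B (insert v S) := by
  intro u hu
  have hanti := card_le_card (secondColorThreats_anti (E := E) (A := A) (B := B)
    (subset_insert v S) u)
  rcases mem_insert.1 hu with rfl | hu
  · have hsplit := (card_union_of_disjoint
      (disjoint_secondColorThreats_filter_piecewise_eq (S := S) hAB hE)).symm.le.trans
        (card_le_card (union_subset (filter_subset _ _) (filter_subset _ _)))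
    omega
  · exact (Nat.mul_le_mul_left 2 hanti).trans (hS u hu)

theorem exists_isMajorityColoring_piecewise (hAB : ∀ v, A v ≠ B v)
    (hE : ∀ u w, E u w → (A u, B u) ≠ (A w, B w)) :
    ∃ S : Finset V, IsMajorityColoring E (S.piecewise B A) := by
  obtain ⟨S, hS, hmax⟩ := (univ.powerset.filter (IsSafeSwitchSet E A B)).exists_max_image card
    ⟨∅, mem_filter.2 ⟨empty_mem_powerset _, fun _ h => absurd h (notMem_empty _)⟩⟩
  simp only [mem_filter, mem_powerset, subset_univ, true_and] at hS hmax
  refine ⟨S, fun v => ?_⟩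
  by_cases hv : v ∈ S
  · exact (Nat.mul_le_mul_left 2
      (card_le_card (filter_piecewise_eq_subset_secondColorThreats hv))).trans (hS v hv)
  · by_contra hbad
    rw [not_le, piecewise_eq_of_notMem _ _ _ hv] at hbad
    have := hmax _ (hS.insert (hAB v) (hE v) hbad)
    rw [card_insert_of_notMem hv] at this
    omega

end SwitchSet

lemma six_le_card_offDiag {s : Finset ℕ} (hs : 3 ≤ s.card) : 6 ≤ s.offDiag.card := by
  rw [offDiag_card]
  have := Nat.mul_le_mul_right s.card hs
  omega

/-- Every digraph whose underlying undirected graph is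
`6`-choosable is majority `3`-choosable. -/
theorem majority_three_choosable_of_underlying_six_choosable
    {V : Type*} [Fintype V] (E : V → V → Prop) (hloopless : ∀ v : V, ¬ E v v)
    (hchoos : ∀ L : V → Finset ℕ, (∀ v, 6 ≤ (L v).card) →
      ∃ f : V → ℕ, (∀ v, f v ∈ L v) ∧
        ∀ u v : V, (underGraph E).Adj u v → f u ≠ f v) :
    MajorityChoosable E 3 := by
  intro L hL
  obtain ⟨f, hfL, hf⟩ := hchoos (fun v => (L v).offDiag.map Nat.pairEquiv.toEmbedding)
    fun v => by rw [card_map]; exact six_le_card_offDiag (hL v)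
  set p : V → ℕ × ℕ := fun v => Nat.pairEquiv.symm (f v)
  have hpL : ∀ v, p v ∈ (L v).offDiag := fun v => mem_map_equiv.1 (hfL v)
  have hp : ∀ u w, E u w → p u ≠ p w := fun u w huw =>
    Nat.pairEquiv.symm.injective.ne
      (hf u w ⟨fun h => hloopless u (h ▸ huw), Or.inl huw⟩)
  obtain ⟨S, hS⟩ := exists_isMajorityColoring_piecewise (A := fun v => (p v).1)
    (B := fun v => (p v).2) (fun v => (mem_offDiag.1 (hpL v)).2.2) hp
  refine ⟨S.piecewise _ _, fun v => ?_, hS⟩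
  by_cases hv : v ∈ S
  · rw [piecewise_eq_of_mem _ _ _ hv]; exact (mem_offDiag.1 (hpL v)).2.1
  · rw [piecewise_eq_of_notMem _ _ _ hv]; exact (mem_offDiag.1 (hpL v)).1
end

section
/- Let D be a digraph and let 0 < p < 1. Suppose there exists a random subset X of V(D) (i.e. a probability distribution over subsets of V(D)) such that for every vertex v, the probability that v lies in X but is not popular in X is at least p. Then D admits a fractional majority coloring with total weight at most 1/p. -/
open scoped Classical

variable {V : Type*} [Fintype V]

/-- `v` is popular in `S`: `v ∈ S` and more than half of the out-neighbors of
`v` lie in `S`. -/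
def Popular (E : V → V → Prop) (v : V) (S : Finset V) : Prop :=
  v ∈ S ∧ (outNbrs E v).card < 2 * ((outNbrs E v).filter (fun w => w ∈ S)).card

/-- `S` is stable: it contains no popular vertex. -/
def StableSet (E : V → V → Prop) (S : Finset V) : Prop :=
  ∀ v : V, ¬ Popular E v S

/-- The digraph `(V, E)` has a fractional majority coloring of total weight at
most `W`: nonnegative weights on the stable sets such that the sets containing
any fixed vertex have weights summing to at least `1`, with all weights summing
to at most `W`. -/
def HasFracMajorityColoring (E : V → V → Prop) (W : ℝ) : Prop :=
  ∃ w : Finset V → ℝ, (∀ T, 0 ≤ w T) ∧ (∀ T, ¬ StableSet E T → w T = 0) ∧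
    (∀ v : V, 1 ≤ ∑ T ∈ Finset.univ.filter (fun T : Finset V => v ∈ T), w T) ∧
    ∑ T : Finset V, w T ≤ W

/-!
Replace the random set `X` by its non-popular part `X' = {v ∈ X | v is not popular in X}`.
Popularity is monotone in the set, so `X'` is stable; and `v ∈ X'` is exactly the event that
`v ∈ X` is not popular in `X`. Thus the law of `X'` is a probability distribution on stable sets
covering every vertex with probability at least `p`, and scaling it by `1/p` gives the
fractional majority coloring.
-/

open Finset

theorem Popular.mono {E : V → V → Prop} {v : V} {S T : Finset V} (h : Popular E v S)
    (hv : v ∈ T) (hST : S ⊆ T) : Popular E v T :=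
  ⟨hv, h.2.trans_le <| Nat.mul_le_mul_left 2 <|
    card_le_card <| monotone_filter_right _ fun _ _ => @hST _⟩

noncomputable def nonPopularPart (E : V → V → Prop) (X : Finset V) : Finset V :=
  X.filter fun v => ¬ Popular E v X

@[simp]
theorem mem_nonPopularPart {E : V → V → Prop} {X : Finset V} {v : V} :
    v ∈ nonPopularPart E X ↔ v ∈ X ∧ ¬ Popular E v X :=
  mem_filter

theorem stableSet_nonPopularPart (E : V → V → Prop) (X : Finset V) :
    StableSet E (nonPopularPart E X) := fun _ hpop =>
  have ⟨hvX, hnot⟩ := mem_nonPopularPart.1 hpop.1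
  hnot <| hpop.mono hvX (filter_subset _ _)

theorem hasFracMajorityColoring_of_stable_distribution (E : V → V → Prop) {p : ℝ} (hp : 0 < p)
    (ν : Finset V → ℝ) (hν0 : ∀ T, 0 ≤ ν T) (hνstable : ∀ T, ¬ StableSet E T → ν T = 0)
    (hνtotal : ∑ T, ν T ≤ 1) (hcover : ∀ v, p ≤ ∑ T with v ∈ T, ν T) :
    HasFracMajorityColoring E (1 / p) := by
  refine ⟨fun T => ν T / p, fun T => div_nonneg (hν0 T) hp.le,
    fun T hT => by simp [hνstable T hT], fun v => ?_, ?_⟩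
  · rw [← sum_div, one_le_div hp]
    exact hcover v
  · rw [← sum_div]
    exact div_le_div_of_nonneg_right hνtotal hp.le

theorem fracMajority_of_random_subset_general
    {V : Type*} [Fintype V] (E : V → V → Prop)
    (p : ℝ) (hp0 : 0 < p)
    (μ : Finset V → ℝ) (hμ0 : ∀ X : Finset V, 0 ≤ μ X)
    (hμ1 : ∑ X : Finset V, μ X = 1)
    (hgood : ∀ v : V,
      p ≤ ∑ X ∈ Finset.univ.filter
            (fun X : Finset V => v ∈ X ∧ ¬ Popular E v X), μ X) :
    HasFracMajorityColoring E (1 / p) := by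
  let ν : Finset V → ℝ := fun T => ∑ X with nonPopularPart E X = T, μ X
  have hν_stable : ∀ T, ¬ StableSet E T → ν T = 0 := fun T hT =>
    sum_eq_zero fun X hX => absurd ((mem_filter.1 hX).2 ▸ stableSet_nonPopularPart E X) hT
  have hν_cover : ∀ v, p ≤ ∑ T with v ∈ T, ν T := fun v => by
    rw [sum_fiberwise_eq_sum_filter]
    simpa using hgood v
  exact hasFracMajorityColoring_of_stable_distribution E hp0 ν
    (fun T => sum_nonneg fun X _ => hμ0 X) hν_stable (by rw [sum_fiberwise, hμ1]) hν_cover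

/-- If there is a random subset `X` of the vertices (a
probability distribution `μ` over subsets) such that every vertex lies in `X`
and is not popular in `X` with probability at least `p` (where `0 < p < 1`),
then the digraph has a fractional majority coloring of total weight at most
`1/p`. -/
theorem fracMajority_of_random_subset
    {V : Type*} [Fintype V] (E : V → V → Prop) (hloopless : ∀ v : V, ¬ E v v)
    (p : ℝ) (hp0 : 0 < p) (hp1 : p < 1)
    (μ : Finset V → ℝ) (hμ0 : ∀ X : Finset V, 0 ≤ μ X)
    (hμ1 : ∑ X : Finset V, μ X = 1)
    (hgood : ∀ v : V,
      p ≤ ∑ X ∈ Finset.univ.filter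
            (fun X : Finset V => v ∈ X ∧ ¬ Popular E v X), μ X) :
    HasFracMajorityColoring E (1 / p) :=
  fracMajority_of_random_subset_general E p hp0 μ hμ0 hμ1 hgood
end

section
/- There exists a constant C > 0 such that for every ε > 0 and every digraph D whose minimum out-degree is at least C·(1/ε)²·ln(2/ε), there exists a fractional majority coloring of D with total weight at most 2 + ε. -/
open scoped Classical

variable {V : Type*} [Fintype V]

namespace FracMaj

/-- weight of a subset under iid `q`-Bernoulli inclusion -/
noncomputable def pr {W : Type*} [Fintype W] (q : ℝ) (S : Finset W) : ℝ :=
  q ^ S.card * (1 - q) ^ (Fintype.card W - S.card)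

lemma sum_pow_powerset {W : Type*} (s : Finset W) (a b : ℝ) :
    ∑ t ∈ s.powerset, a ^ t.card * b ^ (s.card - t.card) = (a + b) ^ s.card := by
  have h := Finset.prod_add (fun _ : W => a) (fun _ : W => b) s
  rw [Finset.prod_const] at h
  rw [h]
  apply Finset.sum_congr rfl
  intro t ht
  rw [Finset.mem_powerset] at ht
  rw [Finset.prod_const, Finset.prod_const, Finset.card_sdiff_of_subset ht]

lemma pr_nonneg {W : Type*} [Fintype W] {q : ℝ} (h0 : 0 ≤ q) (h1 : q ≤ 1) (S : Finset W) :
    0 ≤ pr q S :=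
  mul_nonneg (pow_nonneg h0 _) (pow_nonneg (by linarith) _)

lemma sum_pr {W : Type*} [Fintype W] (q : ℝ) :
    ∑ S ∈ (Finset.univ : Finset W).powerset, pr q S = 1 := by
  have h := sum_pow_powerset (Finset.univ : Finset W) q (1 - q)
  simp only [add_sub_cancel, one_pow] at h
  rw [← h]
  apply Finset.sum_congr rfl
  intro t _
  rw [pr, Finset.card_univ]

/-- The key "atom" lemma: probability that `S ∩ s₀ = K`. -/
lemma atom {W : Type*} [Fintype W] [DecidableEq W] (q : ℝ) (s₀ K : Finset W) (hK : K ⊆ s₀) :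
    ∑ S ∈ (Finset.univ : Finset W).powerset.filter (fun S => S ∩ s₀ = K), pr q S
      = q ^ K.card * (1 - q) ^ (s₀.card - K.card) := by
  classical
  have hcard : ∀ R ∈ (Finset.univ \ s₀ : Finset W).powerset,
      pr q (K ∪ R) = (q ^ K.card * (1 - q) ^ (s₀.card - K.card)) *
        (q ^ R.card * (1 - q) ^ ((Fintype.card W - s₀.card) - R.card)) := by
    intro R hR
    rw [Finset.mem_powerset] at hR
    have hdisj : Disjoint K R := by
      refine Finset.disjoint_left.2 fun a haK haR => ?_
      have := hR haR
      simp only [Finset.mem_sdiff] at this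
      exact this.2 (hK haK)
    have hKc : K.card ≤ s₀.card := Finset.card_le_card hK
    have hs₀ : s₀.card ≤ Fintype.card W := by
      simpa using Finset.card_le_card (Finset.subset_univ s₀)
    have hRc : R.card ≤ Fintype.card W - s₀.card := by
      have := Finset.card_le_card hR
      simpa [Finset.card_sdiff_of_subset (Finset.subset_univ s₀), Finset.card_univ] using this
    rw [pr, Finset.card_union_of_disjoint hdisj]
    rw [pow_add, ← mul_assoc]
    have hexp : Fintype.card W - (K.card + R.card)
        = (s₀.card - K.card) + ((Fintype.card W - s₀.card) - R.card) := by omega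
    rw [hexp, pow_add]
    ring
  rw [Finset.sum_nbij' (i := fun S => S \ s₀) (j := fun R => K ∪ R)
    (t := (Finset.univ \ s₀ : Finset W).powerset)
    (g := fun R => (q ^ K.card * (1 - q) ^ (s₀.card - K.card)) *
        (q ^ R.card * (1 - q) ^ ((Fintype.card W - s₀.card) - R.card)))]
  rotate_left
  · intro S hS
    simp only [Finset.mem_filter, Finset.mem_powerset] at hS
    rw [Finset.mem_powerset]
    intro a ha
    simp only [Finset.mem_sdiff] at ha ⊢
    exact ⟨Finset.mem_univ a, ha.2⟩
  · intro R hR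
    simp only [Finset.mem_filter, Finset.mem_powerset]
    rw [Finset.mem_powerset] at hR
    constructor
    · exact Finset.subset_univ _
    · ext a
      simp only [Finset.mem_inter, Finset.mem_union]
      constructor
      · rintro ⟨h1 | h1, h2⟩
        · exact h1
        · exact absurd h2 (by have := hR h1; simp only [Finset.mem_sdiff] at this; exact this.2)
      · intro h; exact ⟨Or.inl h, hK h⟩
  · intro S hS
    simp only [Finset.mem_filter, Finset.mem_powerset] at hS
    ext a
    simp only [Finset.mem_union, Finset.mem_sdiff]
    constructor
    · rintro (h | h)
      · rw [← hS.2] at h; exact (Finset.mem_inter.1 h).1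
      · exact h.1
    · intro h
      by_cases ha : a ∈ s₀
      · exact Or.inl (by rw [← hS.2]; exact Finset.mem_inter.2 ⟨h, ha⟩)
      · exact Or.inr ⟨h, ha⟩
  · intro R hR
    rw [Finset.mem_powerset] at hR
    ext a
    simp only [Finset.mem_sdiff, Finset.mem_union]
    constructor
    · rintro ⟨h | h, h2⟩
      · exact absurd (hK h) h2
      · exact h
    · intro h
      refine ⟨Or.inr h, fun ha => ?_⟩
      have := hR h
      simp only [Finset.mem_sdiff] at this
      exact this.2 ha
  · intro S hS
    simp only [Finset.mem_filter, Finset.mem_powerset] at hS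
    have : K ∪ S \ s₀ = S := by
      ext a
      simp only [Finset.mem_union, Finset.mem_sdiff]
      constructor
      · rintro (h | h)
        · rw [← hS.2] at h; exact (Finset.mem_inter.1 h).1
        · exact h.1
      · intro h
        by_cases ha : a ∈ s₀
        · exact Or.inl (by rw [← hS.2]; exact Finset.mem_inter.2 ⟨h, ha⟩)
        · exact Or.inr ⟨h, ha⟩
    have hmem : S \ s₀ ∈ (Finset.univ \ s₀ : Finset W).powerset := by
      rw [Finset.mem_powerset]
      intro a ha
      simp only [Finset.mem_sdiff] at ha ⊢
      exact ⟨Finset.mem_univ a, ha.2⟩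
    rw [← hcard _ hmem, this]
  rw [← Finset.mul_sum]
  have h1 : ∑ R ∈ (Finset.univ \ s₀ : Finset W).powerset,
      q ^ R.card * (1 - q) ^ ((Fintype.card W - s₀.card) - R.card) = 1 := by
    have h := sum_pow_powerset (Finset.univ \ s₀ : Finset W) q (1 - q)
    simp only [add_sub_cancel, one_pow] at h
    rw [Finset.card_sdiff_of_subset (Finset.subset_univ s₀), Finset.card_univ] at h
    exact h
  rw [h1, mul_one]


/-- `P(Bin(d,q) ≤ m)` as an explicit sum. -/
noncomputable def bsum (q : ℝ) (d m : ℕ) : ℝ :=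
  ∑ j ∈ Finset.range (m + 1), (d.choose j : ℝ) * q ^ j * (1 - q) ^ (d - j)

lemma bsum_nonneg {q : ℝ} (h0 : 0 ≤ q) (h1 : q ≤ 1) (d m : ℕ) : 0 ≤ bsum q d m := by
  apply Finset.sum_nonneg
  intro j _
  have : (0:ℝ) ≤ 1 - q := by linarith
  positivity

/-- the point mass -/
lemma bsum_sub (q : ℝ) (n m : ℕ) :
    bsum q n (m + 1) - bsum q n m = (n.choose (m+1) : ℝ) * q ^ (m+1) * (1 - q) ^ (n - (m+1)) := by
  rw [bsum, bsum, Finset.sum_range_succ]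
  ring

lemma bsum_mono {q : ℝ} (h0 : 0 ≤ q) (h1 : q ≤ 1) (d m : ℕ) :
    bsum q d m ≤ bsum q d (m + 1) := by
  have h := bsum_sub q d m
  have : (0:ℝ) ≤ 1 - q := by linarith
  have hp : (0:ℝ) ≤ (d.choose (m+1) : ℝ) * q ^ (m+1) * (1 - q) ^ (d - (m+1)) := by positivity
  linarith

/-- one-step recurrence -/
lemma bsum_succ (q : ℝ) (n m : ℕ) :
    bsum q (n + 1) (m + 1) = q * bsum q n m + (1 - q) * bsum q n (m + 1) := by
  rw [bsum, Finset.sum_range_succ' _ (m + 1)]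
  have hterm : ∀ i ∈ Finset.range (m + 1),
      ((n+1).choose (i+1) : ℝ) * q ^ (i+1) * (1 - q) ^ (n + 1 - (i+1))
      = q * ((n.choose i : ℝ) * q ^ i * (1 - q) ^ (n - i))
        + (1 - q) * ((n.choose (i+1) : ℝ) * q ^ (i+1) * (1 - q) ^ (n - (i+1))) := by
    intro i _
    rw [Nat.choose_succ_succ n i]
    push_cast
    rcases Nat.lt_or_ge i n with h | h
    · have e2 : n - i = (n - (i+1)) + 1 := by omega
      rw [e2]
      ring
    · rw [Nat.choose_eq_zero_of_lt (show n < i + 1 by omega)]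
      push_cast
      ring
  rw [Finset.sum_congr rfl hterm, Finset.sum_add_distrib, ← Finset.mul_sum, ← Finset.mul_sum]
  have hzero : ((n+1).choose 0 : ℝ) * q ^ 0 * (1 - q) ^ (n + 1 - 0)
      = (1 - q) * ((n.choose 0 : ℝ) * q ^ 0 * (1 - q) ^ (n - 0)) := by
    simp [pow_succ]
    ring
  rw [hzero]
  have hshift : (1 - q) * (∑ i ∈ Finset.range (m + 1),
      (n.choose (i+1) : ℝ) * q ^ (i+1) * (1 - q) ^ (n - (i+1)))
      + (1 - q) * ((n.choose 0 : ℝ) * q ^ 0 * (1 - q) ^ (n - 0))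
      = (1 - q) * bsum q n (m + 1) := by
    rw [bsum, Finset.sum_range_succ' (fun j => (n.choose j : ℝ) * q ^ j * (1 - q) ^ (n - j)) (m+1)]
    rw [mul_add]
  rw [bsum]
  linarith [hshift]

lemma bsum_zero_left (q : ℝ) (m : ℕ) : bsum q 0 m = 1 := by
  rw [bsum]
  rw [Finset.sum_eq_single 0]
  · simp
  · intro j _ hj
    rw [Nat.choose_eq_zero_of_lt (by omega)]
    simp
  · intro h
    simp at h

lemma bsum_one_zero (q : ℝ) : bsum q 1 0 = 1 - q := by
  rw [bsum, Finset.sum_range_one]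
  norm_num

/-- Key center monotonicity step: for `q ≤ 1/2`. -/
lemma bsum_center_step {q : ℝ} (h0 : 0 ≤ q) (h2 : q ≤ 1/2) (k : ℕ) (hk : 1 ≤ k) :
    bsum q (2*k+1) k ≤ bsum q (2*(k+1)+1) (k+1) := by
  have h1q : (0:ℝ) ≤ 1 - q := by linarith
  obtain ⟨j, rfl⟩ : ∃ j, k = j + 1 := ⟨k - 1, by omega⟩
  set n : ℕ := 2*(j+1)+1 with hn
  have e1 : 2*((j+1)+1)+1 = (n+1) + 1 := by omega
  rw [e1]
  rw [show (j+1)+1 = (j+1)+1 from rfl]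
  rw [bsum_succ q (n+1) (j+1)]
  rw [show (n+1 : ℕ) = n + 1 from rfl]
  rw [bsum_succ q n j, bsum_succ q n (j+1)]
  -- now RHS = q*(q*b j + (1-q)*b (j+1)) + (1-q)*(q*b (j+1) + (1-q)*b (j+2))
  have hsub1 := bsum_sub q n j      -- b(j+1) - b j = C(n,j+1) q^(j+1) (1-q)^(n-(j+1))
  have hsub2 := bsum_sub q n (j+1)  -- b(j+2) - b(j+1) = C(n,j+2) q^(j+2) (1-q)^(n-(j+2))
  have hchoose : (n.choose (j+2) : ℝ) = (n.choose (j+1) : ℝ) := by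
    have : n - (j+1) = j + 2 := by omega
    rw [← this, Nat.choose_symm (by omega)]
  have hexp1 : n - (j+1) = j + 2 := by omega
  have hexp2 : n - (j+2) = j + 1 := by omega
  rw [hexp1] at hsub1
  rw [hexp2, hchoose] at hsub2
  -- goal: b(j+1) ≤ q²·b j + 2q(1-q)·b(j+1) + (1-q)²·b(j+2)
  -- i.e. (1-q)²·(b(j+2)-b(j+1)) ≥ q²·(b(j+1)-b j)
  have hkey : q^2 * ((n.choose (j+1) : ℝ) * q ^ (j+1) * (1 - q) ^ (j+2))
      ≤ (1-q)^2 * ((n.choose (j+1) : ℝ) * q ^ (j+2) * (1 - q) ^ (j+1)) := by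
    have hC : (0:ℝ) ≤ (n.choose (j+1) : ℝ) := Nat.cast_nonneg _
    have expand1 : q^2 * ((n.choose (j+1) : ℝ) * q ^ (j+1) * (1 - q) ^ (j+2))
        = ((n.choose (j+1) : ℝ) * (q ^ (j+1) * (1-q)^(j+1))) * (q^2 * (1 - q)) := by
      rw [pow_succ (1-q) (j+1)]
      ring
    have expand2 : (1-q)^2 * ((n.choose (j+1) : ℝ) * q ^ (j+2) * (1 - q) ^ (j+1))
        = ((n.choose (j+1) : ℝ) * (q ^ (j+1) * (1-q)^(j+1))) * ((1-q)^2 * q) := by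
      rw [pow_succ q (j+1)]
      ring
    rw [expand1, expand2]
    apply mul_le_mul_of_nonneg_left
    · nlinarith [mul_nonneg (mul_nonneg h0 h1q) (show (0:ℝ) ≤ 1 - 2*q by linarith)]
    · positivity
  nlinarith [hkey, hsub1, hsub2]

/-- base: `bsum q 3 1 = (1-q)²(1+2q)` -/
lemma bsum_three_one (q : ℝ) : bsum q 3 1 = (1-q)^2 * (1+2*q) := by
  rw [bsum, Finset.sum_range_succ, Finset.sum_range_one]
  norm_num [Nat.choose]
  ring

/-- For every `d ≥ 2` and `0 ≤ q ≤ 1/2`: `P(Bin(d,q) ≤ ⌊d/2⌋) ≥ (1-q)²(1+2q)`. -/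
lemma bsum_center_ge {q : ℝ} (h0 : 0 ≤ q) (h2 : q ≤ 1/2) (d : ℕ) (hd : 2 ≤ d) :
    (1-q)^2 * (1+2*q) ≤ bsum q d (d / 2) := by
  have h1q : (0:ℝ) ≤ 1 - q := by linarith
  have hodd : ∀ k : ℕ, 1 ≤ k → (1-q)^2 * (1+2*q) ≤ bsum q (2*k+1) k := by
    intro k hk
    induction k with
    | zero => omega
    | succ j ih =>
      rcases Nat.eq_zero_or_pos j with hj | hj
      · subst hj
        rw [show 2*(0+1)+1 = 3 from rfl, bsum_three_one]
      · exact le_trans (ih hj) (bsum_center_step h0 h2 j hj)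
  rcases Nat.even_or_odd d with ⟨k, hk⟩ | ⟨k, hk⟩
  · -- d = 2k, k ≥ 1 : bsum q (2k) k ≥ bsum q (2k+1) k ≥ base
    subst hk
    obtain ⟨i, rfl⟩ : ∃ i, k = i + 1 := ⟨k - 1, by omega⟩
    have hdiv : ((i+1) + (i+1)) / 2 = i + 1 := by omega
    rw [hdiv]
    have hq1 : q ≤ 1 := by linarith
    have hs : bsum q ((i+1)+(i+1)) i ≤ bsum q ((i+1)+(i+1)) (i+1) :=
      bsum_mono h0 hq1 ((i+1)+(i+1)) i
    have hstep : bsum q (((i+1)+(i+1))+1) (i+1)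
        = q * bsum q ((i+1)+(i+1)) i + (1-q) * bsum q ((i+1)+(i+1)) (i+1) :=
      bsum_succ q ((i+1)+(i+1)) i
    have hoddk := hodd (i+1) (by omega)
    rw [show 2*(i+1)+1 = ((i+1)+(i+1))+1 from by ring] at hoddk
    have hmul : q * bsum q ((i+1)+(i+1)) i ≤ q * bsum q ((i+1)+(i+1)) (i+1) :=
      mul_le_mul_of_nonneg_left hs h0
    have hring : q * bsum q ((i+1)+(i+1)) (i+1) + (1-q) * bsum q ((i+1)+(i+1)) (i+1)
        = bsum q ((i+1)+(i+1)) (i+1) := by ring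
    linarith
  · subst hk
    have hk1 : 1 ≤ k := by omega
    have hdiv : (2*k + 1) / 2 = k := by omega
    rw [hdiv]
    exact hodd k hk1


lemma bsum_full (q : ℝ) (d : ℕ) : bsum q d d = 1 := by
  have h := add_pow q (1 - q) d
  simp only [add_sub_cancel, one_pow] at h
  rw [bsum]
  refine Eq.trans (Finset.sum_congr rfl ?_) h.symm
  intro j _
  ring

lemma bsum_ge_one_sub_tail {q : ℝ} (h0 : 0 ≤ q) (h2 : q ≤ 1/2) (d : ℕ) :
    1 - (4*q*(1-q)) ^ (d / 2) ≤ bsum q d (d / 2) := by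
  have h1q : (0:ℝ) ≤ 1 - q := by linarith
  have hq1 : q ≤ 1 := by linarith
  rcases Nat.eq_zero_or_pos d with hd | hd
  · subst hd
    simp only [Nat.zero_div, pow_zero]
    have : bsum q 0 0 = 1 := bsum_full q 0
    linarith
  set m := d / 2 with hm
  have hmd : m ≤ d := Nat.div_le_self d 2
  have hsub : Finset.range (m+1) ⊆ Finset.range (d+1) := by
    apply Finset.range_subset_range.2; omega
  have hsplit : bsum q d d - bsum q d m
      = ∑ j ∈ Finset.range (d+1) \ Finset.range (m+1),
          (d.choose j : ℝ) * q ^ j * (1 - q) ^ (d - j) := by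
    rw [bsum, bsum, eq_comm]
    exact Finset.sum_sdiff_eq_sub hsub
  -- termwise bound
  have hterm : ∀ j ∈ Finset.range (d+1) \ Finset.range (m+1),
      (d.choose j : ℝ) * q ^ j * (1 - q) ^ (d - j)
      ≤ (d.choose j : ℝ) * (q ^ (m+1) * (1 - q) ^ (d - m - 1)) := by
    intro j hj
    simp only [Finset.mem_sdiff, Finset.mem_range] at hj
    have hj1 : m + 1 ≤ j := by omega
    have hj2 : j ≤ d := by omega
    obtain ⟨t, rfl⟩ : ∃ t, j = (m+1) + t := ⟨j - (m+1), by omega⟩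
    have hqt : q ^ t ≤ (1 - q) ^ t := pow_le_pow_left₀ h0 (by linarith) t
    have hC : (0:ℝ) ≤ (d.choose ((m+1)+t) : ℝ) := Nat.cast_nonneg _
    have key : q ^ ((m+1)+t) * (1 - q) ^ (d - ((m+1)+t))
        ≤ q ^ (m+1) * (1 - q) ^ (d - m - 1) := by
      have e : (d - m - 1) = t + (d - ((m+1)+t)) := by omega
      calc q ^ ((m+1)+t) * (1 - q) ^ (d - ((m+1)+t))
          = q ^ (m+1) * (q ^ t * (1 - q) ^ (d - ((m+1)+t))) := by ring
        _ ≤ q ^ (m+1) * ((1-q) ^ t * (1 - q) ^ (d - ((m+1)+t))) := by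
            apply mul_le_mul_of_nonneg_left _ (by positivity)
            exact mul_le_mul_of_nonneg_right hqt (by positivity)
        _ = q ^ (m+1) * (1 - q) ^ (d - m - 1) := by rw [e, pow_add]; ring
    calc (d.choose ((m+1)+t) : ℝ) * q ^ ((m+1)+t) * (1 - q) ^ (d - ((m+1)+t))
        = (d.choose ((m+1)+t) : ℝ) * (q ^ ((m+1)+t) * (1 - q) ^ (d - ((m+1)+t))) := by ring
      _ ≤ (d.choose ((m+1)+t) : ℝ) * (q ^ (m+1) * (1 - q) ^ (d - m - 1)) :=
          mul_le_mul_of_nonneg_left key hC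
  have hchoosesum : ∑ j ∈ Finset.range (d+1) \ Finset.range (m+1), (d.choose j : ℝ)
      ≤ 2 ^ d := by
    have h1 : ∑ j ∈ Finset.range (d+1) \ Finset.range (m+1), (d.choose j : ℝ)
        ≤ ∑ j ∈ Finset.range (d+1), (d.choose j : ℝ) := by
      apply Finset.sum_le_sum_of_subset_of_nonneg (Finset.sdiff_subset)
      intro j _ _
      exact Nat.cast_nonneg _
    have h2 : ∑ j ∈ Finset.range (d+1), (d.choose j : ℝ) = 2 ^ d := by
      have := Nat.sum_range_choose d
      have hcast : ((∑ i ∈ Finset.range (d+1), d.choose i : ℕ) : ℝ) = ((2^d : ℕ) : ℝ) := by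
        rw [this]
      push_cast at hcast
      exact hcast
    linarith
  have htail : bsum q d d - bsum q d m ≤ 2 ^ d * (q ^ (m+1) * (1 - q) ^ (d - m - 1)) := by
    rw [hsplit]
    calc ∑ j ∈ Finset.range (d+1) \ Finset.range (m+1),
          (d.choose j : ℝ) * q ^ j * (1 - q) ^ (d - j)
        ≤ ∑ j ∈ Finset.range (d+1) \ Finset.range (m+1),
          (d.choose j : ℝ) * (q ^ (m+1) * (1 - q) ^ (d - m - 1)) := Finset.sum_le_sum hterm
      _ = (∑ j ∈ Finset.range (d+1) \ Finset.range (m+1), (d.choose j : ℝ))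
            * (q ^ (m+1) * (1 - q) ^ (d - m - 1)) := by rw [Finset.sum_mul]
      _ ≤ 2 ^ d * (q ^ (m+1) * (1 - q) ^ (d - m - 1)) := by
          apply mul_le_mul_of_nonneg_right hchoosesum (by positivity)
  have hfinal : (2:ℝ) ^ d * (q ^ (m+1) * (1 - q) ^ (d - m - 1)) ≤ (4*q*(1-q)) ^ m := by
    rcases Nat.even_or_odd d with ⟨k, hk⟩ | ⟨k, hk⟩
    · -- d = 2k, m = k, k ≥ 1
      have hkm : m = k := by omega
      have hk1 : 1 ≤ k := by omega
      obtain ⟨i, rfl⟩ : ∃ i, k = i + 1 := ⟨k - 1, by omega⟩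
      have e1 : d = 2*(i+1) := by omega
      have e2 : d - m - 1 = i := by omega
      rw [e2, hkm, e1]
      have : (2:ℝ) ^ (2*(i+1)) = 4 ^ (i+1) := by
        rw [pow_mul]; norm_num
      rw [this]
      have expand : (4*q*(1-q)) ^ (i+1) = 4^(i+1) * (q^(i+1) * (1-q)^(i+1)) := by
        rw [mul_pow, mul_pow]; ring
      rw [expand]
      apply mul_le_mul_of_nonneg_left _ (by positivity)
      -- q^(i+2) * (1-q)^i ≤ q^(i+1) * (1-q)^(i+1)
      have e3 : (i+1) + 1 = i + 2 := rfl
      calc q ^ (i+1+1) * (1-q) ^ i = (q ^ (i+1) * (1-q) ^ i) * q := by ring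
        _ ≤ (q ^ (i+1) * (1-q) ^ i) * (1-q) := by
            apply mul_le_mul_of_nonneg_left (by linarith) (by positivity)
        _ = q^(i+1) * (1-q)^(i+1) := by ring
    · -- d = 2k+1, m = k
      have hkm : m = k := by omega
      have e1 : d = 2*k+1 := by omega
      have e2 : d - m - 1 = k := by omega
      rw [e2, hkm, e1]
      have : (2:ℝ) ^ (2*k+1) = 2 * 4 ^ k := by
        rw [pow_succ, pow_mul]; norm_num; ring
      rw [this]
      have expand : (4*q*(1-q)) ^ k = 4^k * (q^k * (1-q)^k) := by
        rw [mul_pow, mul_pow]; ring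
      rw [expand]
      calc 2 * 4^k * (q ^ (k+1) * (1-q)^k) = (4^k * (q^k * (1-q)^k)) * (2*q) := by ring
        _ ≤ (4^k * (q^k * (1-q)^k)) * 1 := by
            apply mul_le_mul_of_nonneg_left (by linarith) (by positivity)
        _ = 4^k * (q^k * (1-q)^k) := by ring
  have hb := bsum_full q d
  linarith


/-- the stable set extracted from a random set: unpopular elements of `S`. -/
noncomputable def T1 (E : V → V → Prop) (S : Finset V) : Finset V :=
  S.filter (fun v => 2 * ((outNbrs E v).filter (fun w => w ∈ S)).card ≤ (outNbrs E v).card)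

lemma mem_T1_iff (E : V → V → Prop) (S : Finset V) (v : V) :
    v ∈ T1 E S ↔ v ∈ S ∧
      2 * ((outNbrs E v).filter (fun w => w ∈ S)).card ≤ (outNbrs E v).card := by
  rw [T1, Finset.mem_filter]

lemma T1_stable (E : V → V → Prop) (S : Finset V) : StableSet E (T1 E S) := by
  intro v hv
  obtain ⟨hvT, hcard⟩ := hv
  rw [mem_T1_iff] at hvT
  have hsub : (outNbrs E v).filter (fun w => w ∈ T1 E S)
      ⊆ (outNbrs E v).filter (fun w => w ∈ S) := by
    intro w hw
    rw [Finset.mem_filter] at hw ⊢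
    exact ⟨hw.1, ((mem_T1_iff E S w).1 hw.2).1⟩
  have := Finset.card_le_card hsub
  omega

/-- Coverage of scheme 1. -/
lemma cov1 (E : V → V → Prop) (hE : ∀ v, ¬ E v v) (q : ℝ) (v : V) :
    ∑ S ∈ (Finset.univ : Finset V).powerset.filter (fun S => v ∈ T1 E S), pr q S
      = q * bsum q (outNbrs E v).card ((outNbrs E v).card / 2) := by
  classical
  set N := outNbrs E v with hN
  obtain ⟨d, hd⟩ : ∃ d, N.card = d := ⟨_, rfl⟩
  rw [hd]
  have hvN : v ∉ N := by
    rw [hN, outNbrs, Finset.mem_filter]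
    push_neg
    intro _
    exact hE v
  -- Step 1: decompose the event into atoms
  have hdecomp : (Finset.univ : Finset V).powerset.filter (fun S => v ∈ T1 E S)
      = (N.powerset.filter (fun K => 2 * K.card ≤ d)).biUnion
          (fun K => (Finset.univ : Finset V).powerset.filter
            (fun S => S ∩ insert v N = insert v K)) := by
    ext S
    simp only [Finset.mem_biUnion, Finset.mem_filter, Finset.mem_powerset,
      Finset.subset_univ, true_and, mem_T1_iff]
    constructor
    · rintro ⟨hvS, hcard⟩
      refine ⟨N ∩ S, ⟨Finset.inter_subset_left, ?_⟩, ?_⟩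
      · rw [← hN] at hcard
        rw [Finset.filter_mem_eq_inter] at hcard
        omega
      · ext a
        simp only [Finset.mem_inter, Finset.mem_insert]
        constructor
        · rintro ⟨haS, ha | ha⟩
          · exact Or.inl ha
          · exact Or.inr ⟨ha, haS⟩
        · rintro (rfl | ⟨h1, h2⟩)
          · exact ⟨hvS, Or.inl rfl⟩
          · exact ⟨h2, Or.inr h1⟩
    · rintro ⟨K, ⟨hKN, hKc⟩, hSK⟩
      have hvS : v ∈ S := by
        have : v ∈ S ∩ insert v N := by
          rw [hSK]; exact Finset.mem_insert_self v K
        exact (Finset.mem_inter.1 this).1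
      have hfil : N.filter (fun w => w ∈ S) = K := by
        ext a
        simp only [Finset.mem_filter]
        constructor
        · rintro ⟨haN, haS⟩
          have : a ∈ S ∩ insert v N := Finset.mem_inter.2 ⟨haS, Finset.mem_insert_of_mem haN⟩
          rw [hSK, Finset.mem_insert] at this
          rcases this with rfl | h
          · exact absurd haN hvN
          · exact h
        · intro haK
          have haN : a ∈ N := hKN haK
          have : a ∈ S ∩ insert v N := by
            rw [hSK]; exact Finset.mem_insert_of_mem haK
          exact ⟨haN, (Finset.mem_inter.1 this).1⟩
      rw [hfil]
      refine ⟨hvS, ?_⟩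
      rw [← hN, hd]
      exact hKc
  rw [hdecomp]
  rw [Finset.sum_biUnion]
  swap
  · -- pairwise disjoint
    intro K hK K' hK' hne
    simp only [Finset.mem_coe, Finset.mem_filter, Finset.mem_powerset] at hK hK'
    apply Finset.disjoint_left.2
    intro S hS hS'
    simp only [Finset.mem_filter] at hS hS'
    apply hne
    have h1 := hS.2
    have h2 := hS'.2
    rw [h1] at h2
    -- insert v K = insert v K' with v ∉ K, K'
    have : K = K' := by
      ext a
      have hav : a ∈ K → a ≠ v := fun h hav => hvN (hK.1 (hav ▸ h))
      have hav' : a ∈ K' → a ≠ v := fun h hav => hvN (hK'.1 (hav ▸ h))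
      constructor
      · intro h
        have : a ∈ insert v K' := h2 ▸ Finset.mem_insert_of_mem h
        rcases Finset.mem_insert.1 this with rfl | h'
        · exact absurd h (by intro hc; exact hvN (hK.1 hc))
        · exact h'
      · intro h
        have : a ∈ insert v K := h2.symm ▸ Finset.mem_insert_of_mem h
        rcases Finset.mem_insert.1 this with rfl | h'
        · exact absurd h (by intro hc; exact hvN (hK'.1 hc))
        · exact h'
    exact this
  -- Step 3: evaluate each atom
  have hatom : ∀ K ∈ N.powerset.filter (fun K => 2 * K.card ≤ d),
      ∑ S ∈ (Finset.univ : Finset V).powerset.filter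
          (fun S => S ∩ insert v N = insert v K), pr q S
        = q ^ (K.card + 1) * (1 - q) ^ (d - K.card) := by
    intro K hK
    simp only [Finset.mem_filter, Finset.mem_powerset] at hK
    have hKN := hK.1
    have hvK : v ∉ K := fun h => hvN (hKN h)
    have hsub : insert v K ⊆ insert v N := Finset.insert_subset_insert v hKN
    rw [atom q (insert v N) (insert v K) hsub]
    rw [Finset.card_insert_of_notMem hvK, Finset.card_insert_of_notMem hvN]
    rw [Nat.succ_sub_succ, hd]
  rw [Finset.sum_congr rfl hatom]
  -- Step 4: group by cardinality
  have hgroup : ∑ K ∈ N.powerset.filter (fun K => 2 * K.card ≤ d),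
      q ^ (K.card + 1) * (1 - q) ^ (d - K.card)
      = ∑ j ∈ Finset.range (d + 1), (if 2 * j ≤ d then
          (d.choose j : ℝ) * (q ^ (j+1) * (1 - q) ^ (d - j)) else 0) := by
    rw [Finset.sum_filter]
    rw [Finset.sum_powerset, hd]
    apply Finset.sum_congr rfl
    intro j hj
    have hinner : ∀ K ∈ N.powersetCard j,
        (if 2 * K.card ≤ d then q ^ (K.card + 1) * (1 - q) ^ (d - K.card) else 0)
        = (if 2 * j ≤ d then q ^ (j + 1) * (1 - q) ^ (d - j) else 0) := by
      intro K hK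
      have hKc : K.card = j := (Finset.mem_powersetCard.1 hK).2
      rw [hKc]
    rw [Finset.sum_congr rfl hinner, Finset.sum_const, Finset.card_powersetCard, hd,
      nsmul_eq_mul]
    split_ifs
    · ring
    · ring
  rw [hgroup]
  -- finish: the ite-sum is q * bsum
  have hfin : ∑ j ∈ Finset.range (d + 1), (if 2 * j ≤ d then
      (d.choose j : ℝ) * (q ^ (j+1) * (1 - q) ^ (d - j)) else 0)
      = q * bsum q d (d / 2) := by
    rw [bsum, Finset.mul_sum]
    rw [← Finset.sum_filter]
    have hrange : (Finset.range (d + 1)).filter (fun j => 2 * j ≤ d)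
        = Finset.range (d / 2 + 1) := by
      ext j
      simp only [Finset.mem_filter, Finset.mem_range]
      omega
    rw [hrange]
    apply Finset.sum_congr rfl
    intro j _
    rw [pow_succ]
    ring
  rw [hfin]


noncomputable def sig (E : V → V → Prop) (v : V) : V :=
  if h : (outNbrs E v).Nonempty then h.choose else v

lemma sig_mem {E : V → V → Prop} {v : V} (h : (outNbrs E v).Nonempty) :
    sig E v ∈ outNbrs E v := by
  rw [sig, dif_pos h]
  exact h.choose_spec

lemma outNbrs_eq_singleton {E : V → V → Prop} {v : V} (h : (outNbrs E v).card = 1) :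
    outNbrs E v = {sig E v} := by
  obtain ⟨a, ha⟩ := Finset.card_eq_one.1 h
  have hne : (outNbrs E v).Nonempty := by rw [ha]; exact ⟨a, Finset.mem_singleton_self a⟩
  have := sig_mem hne
  rw [ha] at this ⊢
  rw [Finset.mem_singleton] at this
  rw [this]

lemma sig_ne {E : V → V → Prop} (hE : ∀ u, ¬ E u u) {v : V}
    (h : (outNbrs E v).Nonempty) : sig E v ≠ v := by
  intro hc
  have := sig_mem h
  rw [hc, outNbrs, Finset.mem_filter] at this
  exact hE v this.2

/-- priority of `v` read off the random set `S ⊆ V × Bool` -/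
noncomputable def rho (S : Finset (V × Bool)) (v : V) : ℕ :=
  (if (v, false) ∈ S then 2 else 0) + (if (v, true) ∈ S then 1 else 0)

lemma rho_lt_four (S : Finset (V × Bool)) (v : V) : rho S v < 4 := by
  rw [rho]; split_ifs <;> norm_num

noncomputable def pairOf (y : V) : Finset (V × Bool) := {(y, false), (y, true)}

noncomputable def bitsOf (y : V) (a : ℕ) : Finset (V × Bool) :=
  (if 2 ≤ a then {(y, false)} else ∅) ∪ (if a % 2 = 1 then {(y, true)} else ∅)

lemma bitsOf_subset (y : V) (a : ℕ) : bitsOf y a ⊆ pairOf y := by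
  rw [bitsOf, pairOf]
  intro p hp
  simp only [Finset.mem_union, Finset.mem_insert, Finset.mem_singleton] at *
  split_ifs at hp <;> simp_all

lemma card_pairOf (y : V) : (pairOf y).card = 2 := by
  rw [pairOf, Finset.card_insert_of_notMem (by simp), Finset.card_singleton]

lemma pairOf_disjoint {y z : V} (h : y ≠ z) : Disjoint (pairOf y) (pairOf z) := by
  rw [Finset.disjoint_left]
  intro p hp hq
  rw [pairOf, Finset.mem_insert, Finset.mem_singleton] at hp hq
  have hy : p.1 = y := by rcases hp with rfl | rfl <;> rfl
  have hz : p.1 = z := by rcases hq with rfl | rfl <;> rfl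
  exact h (hy.symm.trans hz)

lemma rho_eq_iff (S : Finset (V × Bool)) (y : V) (a : ℕ) (ha : a < 4) :
    rho S y = a ↔ S ∩ pairOf y = bitsOf y a := by
  by_cases h1 : (y, false) ∈ S <;> by_cases h2 : (y, true) ∈ S <;>
    interval_cases a <;>
    simp only [rho, pairOf, bitsOf, h1, h2, if_true, if_false] <;>
    norm_num [Finset.insert_subset_iff, h1, h2] <;>
    · rw [Finset.ext_iff]
      first
      | (intro p
         simp only [Finset.mem_inter, Finset.mem_insert, Finset.mem_singleton,
           Finset.mem_union, Finset.notMem_empty]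
         constructor
         · rintro ⟨hpS, rfl | rfl⟩ <;> simp_all
         · intro hp
           first
           | exact hp.elim
           | (rcases hp with rfl | rfl <;> simp_all)
           | (rcases hp with rfl <;> simp_all))
      | (intro hcontra
         first
         | (have := hcontra (y, false)
            simp only [Finset.mem_inter, Finset.mem_insert, Finset.mem_singleton,
              Finset.mem_union, Finset.notMem_empty, Prod.mk.injEq, h1] at this
            simp at this
            done)
         | (have := hcontra (y, true)
            simp only [Finset.mem_inter, Finset.mem_insert, Finset.mem_singleton,
              Finset.mem_union, Finset.notMem_empty, Prod.mk.injEq, h2] at this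
            simp_all))


/-- split an intersection condition over a disjoint union of three blocks -/
lemma split3 {W : Type*} [DecidableEq W] (S A B C KA KB KC : Finset W)
    (hAB : Disjoint A B) (hAC : Disjoint A C) (hBC : Disjoint B C)
    (hKA : KA ⊆ A) (hKB : KB ⊆ B) (hKC : KC ⊆ C) :
    S ∩ (A ∪ B ∪ C) = KA ∪ KB ∪ KC ↔ (S ∩ A = KA ∧ S ∩ B = KB ∧ S ∩ C = KC) := by
  constructor
  · intro h
    refine ⟨?_, ?_, ?_⟩ <;>
      · ext p
        constructor
        · intro hp
          rw [Finset.mem_inter] at hp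
          have hmem : p ∈ KA ∪ KB ∪ KC := by
            rw [← h, Finset.mem_inter]
            exact ⟨hp.1, by simp only [Finset.mem_union]; tauto⟩
          simp only [Finset.mem_union] at hmem
          rcases hmem with (hk | hk) | hk <;>
            first
            | exact hk
            | (exfalso
               first
               | exact Finset.disjoint_left.1 hAB (hKA hk) hp.2
               | exact Finset.disjoint_left.1 hAC (hKA hk) hp.2
               | exact Finset.disjoint_left.1 hBC (hKB hk) hp.2
               | exact Finset.disjoint_left.1 (hAB.symm) (hKB hk) hp.2
               | exact Finset.disjoint_left.1 (hAC.symm) (hKC hk) hp.2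
               | exact Finset.disjoint_left.1 (hBC.symm) (hKC hk) hp.2)
        · intro hp
          have h1 : p ∈ KA ∪ KB ∪ KC := by simp only [Finset.mem_union]; tauto
          rw [← h, Finset.mem_inter] at h1
          rw [Finset.mem_inter]
          refine ⟨h1.1, ?_⟩
          first
          | exact hKA hp
          | exact hKB hp
          | exact hKC hp
  · rintro ⟨h1, h2, h3⟩
    rw [Finset.inter_union_distrib_left, Finset.inter_union_distrib_left, h1, h2, h3]



lemma split2 {W : Type*} [DecidableEq W] (S A B KA KB : Finset W)
    (hAB : Disjoint A B) (hKA : KA ⊆ A) (hKB : KB ⊆ B) :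
    S ∩ (A ∪ B) = KA ∪ KB ↔ (S ∩ A = KA ∧ S ∩ B = KB) := by
  constructor
  · intro h
    constructor <;>
      · ext p
        constructor
        · intro hp
          rw [Finset.mem_inter] at hp
          have hmem : p ∈ KA ∪ KB := by
            rw [← h, Finset.mem_inter]
            exact ⟨hp.1, by simp only [Finset.mem_union]; tauto⟩
          simp only [Finset.mem_union] at hmem
          rcases hmem with hk | hk <;>
            first
            | exact hk
            | (exfalso
               first
               | exact Finset.disjoint_left.1 hAB (hKA hk) hp.2
               | exact Finset.disjoint_left.1 hAB.symm (hKB hk) hp.2)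
        · intro hp
          have h1 : p ∈ KA ∪ KB := by simp only [Finset.mem_union]; tauto
          rw [← h, Finset.mem_inter] at h1
          rw [Finset.mem_inter]
          refine ⟨h1.1, ?_⟩
          first
          | exact hKA hp
          | exact hKB hp
  · rintro ⟨h1, h2⟩
    rw [Finset.inter_union_distrib_left, h1, h2]

lemma pair_atom {v w : V} (hvw : v ≠ w) (a b : ℕ) (ha : a < 4) (hb : b < 4) :
    ∑ S ∈ (Finset.univ : Finset (V × Bool)).powerset.filter
        (fun S => rho S v = a ∧ rho S w = b), pr (1/2 : ℝ) S = 1/16 := by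
  classical
  have hd : Disjoint (pairOf v) (pairOf w) := pairOf_disjoint hvw
  have hKsub : bitsOf v a ∪ bitsOf w b ⊆ pairOf v ∪ pairOf w :=
    Finset.union_subset_union (bitsOf_subset v a) (bitsOf_subset w b)
  have hfilter : (Finset.univ : Finset (V × Bool)).powerset.filter
      (fun S => rho S v = a ∧ rho S w = b)
      = (Finset.univ : Finset (V × Bool)).powerset.filter
        (fun S => S ∩ (pairOf v ∪ pairOf w) = bitsOf v a ∪ bitsOf w b) := by
    apply Finset.filter_congr
    intro S _
    rw [rho_eq_iff S v a ha, rho_eq_iff S w b hb]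
    exact (split2 S (pairOf v) (pairOf w) (bitsOf v a) (bitsOf w b) hd
      (bitsOf_subset v a) (bitsOf_subset w b)).symm
  rw [hfilter, atom (1/2 : ℝ) _ _ hKsub]
  have hcards : (pairOf v ∪ pairOf w).card = 4 := by
    rw [Finset.card_union_of_disjoint hd, card_pairOf, card_pairOf]
  have hKle : (bitsOf v a ∪ bitsOf w b).card ≤ 4 := by
    rw [← hcards]; exact Finset.card_le_card hKsub
  rw [hcards]
  have : (1 - (1/2 : ℝ)) = 1/2 := by norm_num
  rw [this, ← pow_add, Nat.add_sub_cancel' hKle]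
  norm_num

lemma triple_atom {v w x : V} (hvw : v ≠ w) (hvx : v ≠ x) (hwx : w ≠ x)
    (a b c : ℕ) (ha : a < 4) (hb : b < 4) (hc : c < 4) :
    ∑ S ∈ (Finset.univ : Finset (V × Bool)).powerset.filter
        (fun S => rho S v = a ∧ rho S w = b ∧ rho S x = c), pr (1/2 : ℝ) S = 1/64 := by
  classical
  have hd1 : Disjoint (pairOf v) (pairOf w) := pairOf_disjoint hvw
  have hd2 : Disjoint (pairOf v) (pairOf x) := pairOf_disjoint hvx
  have hd3 : Disjoint (pairOf w) (pairOf x) := pairOf_disjoint hwx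
  have hKsub : bitsOf v a ∪ bitsOf w b ∪ bitsOf x c ⊆ pairOf v ∪ pairOf w ∪ pairOf x :=
    Finset.union_subset_union
      (Finset.union_subset_union (bitsOf_subset v a) (bitsOf_subset w b)) (bitsOf_subset x c)
  have hfilter : (Finset.univ : Finset (V × Bool)).powerset.filter
      (fun S => rho S v = a ∧ rho S w = b ∧ rho S x = c)
      = (Finset.univ : Finset (V × Bool)).powerset.filter
        (fun S => S ∩ (pairOf v ∪ pairOf w ∪ pairOf x)
          = bitsOf v a ∪ bitsOf w b ∪ bitsOf x c) := by
    apply Finset.filter_congr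
    intro S _
    rw [rho_eq_iff S v a ha, rho_eq_iff S w b hb, rho_eq_iff S x c hc]
    exact (split3 S (pairOf v) (pairOf w) (pairOf x) _ _ _ hd1 hd2 hd3
      (bitsOf_subset v a) (bitsOf_subset w b) (bitsOf_subset x c)).symm
  rw [hfilter, atom (1/2 : ℝ) _ _ hKsub]
  have hcards : (pairOf v ∪ pairOf w ∪ pairOf x).card = 6 := by
    rw [Finset.card_union_of_disjoint (by
        rw [Finset.disjoint_union_left]; exact ⟨hd2, hd3⟩),
      Finset.card_union_of_disjoint hd1, card_pairOf, card_pairOf, card_pairOf]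
  have hKle : (bitsOf v a ∪ bitsOf w b ∪ bitsOf x c).card ≤ 6 := by
    rw [← hcards]; exact Finset.card_le_card hKsub
  rw [hcards]
  have : (1 - (1/2 : ℝ)) = 1/2 := by norm_num
  rw [this, ← pow_add, Nat.add_sub_cancel' hKle]
  norm_num


/-- the degree-one booster stable set -/
noncomputable def T2 (E : V → V → Prop) (S : Finset (V × Bool)) : Finset V :=
  Finset.univ.filter (fun v => (outNbrs E v).card = 1 ∧ rho S v < rho S (sig E v) ∧
    ¬ ((outNbrs E (sig E v)).card = 1 ∧ rho S (sig E v) < rho S (sig E (sig E v))))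

lemma T2_stable (E : V → V → Prop) (S : Finset (V × Bool)) : StableSet E (T2 E S) := by
  intro v hv
  obtain ⟨hvT, hcard⟩ := hv
  rw [T2, Finset.mem_filter] at hvT
  obtain ⟨_, hdeg, hlt, hnot⟩ := hvT
  rw [hdeg] at hcard
  have hpos : 0 < ((outNbrs E v).filter (fun w => w ∈ T2 E S)).card := by omega
  obtain ⟨u, hu⟩ := Finset.card_pos.1 hpos
  rw [Finset.mem_filter] at hu
  have husig : u = sig E v := by
    have := hu.1
    rw [outNbrs_eq_singleton hdeg, Finset.mem_singleton] at this
    exact this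
  have hsigT : sig E v ∈ T2 E S := husig ▸ hu.2
  rw [T2, Finset.mem_filter] at hsigT
  exact hnot ⟨hsigT.2.1, hsigT.2.2.1⟩

/-- favorable index sets -/
def F2 : Finset (ℕ × ℕ) :=
  ((Finset.range 4) ×ˢ (Finset.range 4)).filter (fun p => p.1 < p.2)

def F3 : Finset ((ℕ × ℕ) × ℕ) :=
  (((Finset.range 4) ×ˢ (Finset.range 4)) ×ˢ (Finset.range 4)).filter
    (fun p => p.1.1 < p.1.2 ∧ ¬ (p.1.2 < p.2))

lemma F2_card : F2.card = 6 := by decide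

lemma F3_card : F3.card = 20 := by decide

lemma pair_sum {v w : V} (hvw : v ≠ w) :
    ∑ S ∈ (Finset.univ : Finset (V × Bool)).powerset.filter
        (fun S => rho S v < rho S w), pr (1/2 : ℝ) S = 3/8 := by
  classical
  have hdecomp : (Finset.univ : Finset (V × Bool)).powerset.filter
      (fun S => rho S v < rho S w)
      = F2.biUnion (fun p => (Finset.univ : Finset (V × Bool)).powerset.filter
          (fun S => rho S v = p.1 ∧ rho S w = p.2)) := by
    ext S
    simp only [Finset.mem_biUnion, Finset.mem_filter, Finset.mem_powerset,
      Finset.subset_univ, true_and, F2, Finset.mem_product, Finset.mem_range]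
    constructor
    · intro h
      exact ⟨(rho S v, rho S w), ⟨⟨rho_lt_four S v, rho_lt_four S w⟩, h⟩, rfl, rfl⟩
    · rintro ⟨p, ⟨_, hp⟩, h1, h2⟩
      rw [h1, h2]; exact hp
  rw [hdecomp, Finset.sum_biUnion]
  swap
  · intro p hp p' hp' hne
    apply Finset.disjoint_left.2
    intro S hS hS'
    simp only [Finset.mem_filter] at hS hS'
    apply hne
    have : p = p' := by
      apply Prod.ext
      · rw [← hS.2.1, ← hS'.2.1]
      · rw [← hS.2.2, ← hS'.2.2]
    exact this
  have heach : ∀ p ∈ F2, ∑ S ∈ (Finset.univ : Finset (V × Bool)).powerset.filter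
      (fun S => rho S v = p.1 ∧ rho S w = p.2), pr (1/2 : ℝ) S = 1/16 := by
    intro p hp
    simp only [F2, Finset.mem_filter, Finset.mem_product, Finset.mem_range] at hp
    exact pair_atom hvw p.1 p.2 hp.1.1 hp.1.2
  rw [Finset.sum_congr rfl heach, Finset.sum_const, F2_card, nsmul_eq_mul]
  norm_num

lemma triple_sum {v w x : V} (hvw : v ≠ w) (hvx : v ≠ x) (hwx : w ≠ x) :
    ∑ S ∈ (Finset.univ : Finset (V × Bool)).powerset.filter
        (fun S => rho S v < rho S w ∧ ¬ (rho S w < rho S x)), pr (1/2 : ℝ) S = 5/16 := by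
  classical
  have hdecomp : (Finset.univ : Finset (V × Bool)).powerset.filter
      (fun S => rho S v < rho S w ∧ ¬ (rho S w < rho S x))
      = F3.biUnion (fun p => (Finset.univ : Finset (V × Bool)).powerset.filter
          (fun S => rho S v = p.1.1 ∧ rho S w = p.1.2 ∧ rho S x = p.2)) := by
    ext S
    simp only [Finset.mem_biUnion, Finset.mem_filter, Finset.mem_powerset,
      Finset.subset_univ, true_and, F3, Finset.mem_product, Finset.mem_range]
    constructor
    · intro h
      exact ⟨((rho S v, rho S w), rho S x),
        ⟨⟨⟨rho_lt_four S v, rho_lt_four S w⟩, rho_lt_four S x⟩, h⟩, rfl, rfl, rfl⟩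
    · rintro ⟨p, ⟨_, hp⟩, h1, h2, h3⟩
      rw [h1, h2, h3]; exact hp
  rw [hdecomp, Finset.sum_biUnion]
  swap
  · intro p hp p' hp' hne
    apply Finset.disjoint_left.2
    intro S hS hS'
    simp only [Finset.mem_filter] at hS hS'
    apply hne
    have : p = p' := by
      apply Prod.ext
      · apply Prod.ext
        · rw [← hS.2.1, ← hS'.2.1]
        · rw [← hS.2.2.1, ← hS'.2.2.1]
      · rw [← hS.2.2.2, ← hS'.2.2.2]
    exact this
  have heach : ∀ p ∈ F3, ∑ S ∈ (Finset.univ : Finset (V × Bool)).powerset.filter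
      (fun S => rho S v = p.1.1 ∧ rho S w = p.1.2 ∧ rho S x = p.2), pr (1/2 : ℝ) S
        = 1/64 := by
    intro p hp
    simp only [F3, Finset.mem_filter, Finset.mem_product, Finset.mem_range] at hp
    exact triple_atom hvw hvx hwx p.1.1 p.1.2 p.2 hp.1.1.1 hp.1.1.2 hp.1.2
  rw [Finset.sum_congr rfl heach, Finset.sum_const, F3_card, nsmul_eq_mul]
  norm_num

/-- coverage of scheme 2 for degree-one vertices -/
lemma cov2_ge (E : V → V → Prop) (hE : ∀ u, ¬ E u u) (v : V)
    (hdeg : (outNbrs E v).card = 1) :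
    (5/16 : ℝ) ≤ ∑ S ∈ (Finset.univ : Finset (V × Bool)).powerset.filter
        (fun S => v ∈ T2 E S), pr (1/2 : ℝ) S := by
  classical
  have hvne : (outNbrs E v).Nonempty := Finset.card_pos.1 (by omega)
  set w := sig E v with hw
  have hvw : v ≠ w := (sig_ne hE hvne).symm
  have hT2mem : ∀ S : Finset (V × Bool), (rho S v < rho S w ∧
      ¬ ((outNbrs E w).card = 1 ∧ rho S w < rho S (sig E w))) → v ∈ T2 E S := by
    intro S hS
    rw [T2, Finset.mem_filter]
    exact ⟨Finset.mem_univ v, hdeg, hS.1, hS.2⟩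
  by_cases hcase : (outNbrs E w).card = 1 ∧ sig E w ≠ v
  · -- use the triple bound
    obtain ⟨hdegw, hxv⟩ := hcase
    set x := sig E w with hx
    have hwne : (outNbrs E w).Nonempty := Finset.card_pos.1 (by omega)
    have hwx : w ≠ x := (sig_ne hE hwne).symm
    have hvx : v ≠ x := fun h => hxv h.symm
    have hsub : (Finset.univ : Finset (V × Bool)).powerset.filter
        (fun S => rho S v < rho S w ∧ ¬ (rho S w < rho S x))
        ⊆ (Finset.univ : Finset (V × Bool)).powerset.filter (fun S => v ∈ T2 E S) := by
      intro S hS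
      simp only [Finset.mem_filter] at hS ⊢
      refine ⟨hS.1, hT2mem S ⟨hS.2.1, ?_⟩⟩
      rintro ⟨_, hlt⟩
      exact hS.2.2 hlt
    calc (5/16 : ℝ)
        = ∑ S ∈ (Finset.univ : Finset (V × Bool)).powerset.filter
            (fun S => rho S v < rho S w ∧ ¬ (rho S w < rho S x)), pr (1/2 : ℝ) S :=
          (triple_sum hvw hvx hwx).symm
      _ ≤ _ := Finset.sum_le_sum_of_subset_of_nonneg hsub
          (fun S _ _ => pr_nonneg (by norm_num) (by norm_num) S)
  · -- use the pair bound
    have hsub : (Finset.univ : Finset (V × Bool)).powerset.filter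
        (fun S => rho S v < rho S w)
        ⊆ (Finset.univ : Finset (V × Bool)).powerset.filter (fun S => v ∈ T2 E S) := by
      intro S hS
      simp only [Finset.mem_filter] at hS ⊢
      refine ⟨hS.1, hT2mem S ⟨hS.2, ?_⟩⟩
      rintro ⟨hdegw, hlt⟩
      have hxv : sig E w = v := by
        by_contra hc
        exact hcase ⟨hdegw, hc⟩
      rw [hxv] at hlt
      exact Nat.lt_asymm hS.2 hlt
    calc (5/16 : ℝ)
        ≤ (3/8 : ℝ) := by norm_num
      _ = ∑ S ∈ (Finset.univ : Finset (V × Bool)).powerset.filter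
            (fun S => rho S v < rho S w), pr (1/2 : ℝ) S := (pair_sum hvw).symm
      _ ≤ _ := Finset.sum_le_sum_of_subset_of_nonneg hsub
          (fun S _ _ => pr_nonneg (by norm_num) (by norm_num) S)


lemma sum_fiber_swap {ι : Type*} [Fintype ι] (p : ι → ℝ) (τ : ι → Finset V)
    (P : Finset V → Prop) [DecidablePred P] :
    ∑ T ∈ Finset.univ.filter (fun T : Finset V => P T),
        ∑ i ∈ Finset.univ.filter (fun i => τ i = T), p i
      = ∑ i ∈ Finset.univ.filter (fun i => P (τ i)), p i := by
  classical
  calc ∑ T ∈ Finset.univ.filter (fun T : Finset V => P T),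
        ∑ i ∈ Finset.univ.filter (fun i => τ i = T), p i
      = ∑ T ∈ Finset.univ.filter (fun T : Finset V => P T),
          ∑ i ∈ Finset.univ, if τ i = T then p i else 0 :=
        Finset.sum_congr rfl (fun T _ => Finset.sum_filter _ _)
    _ = ∑ i ∈ Finset.univ, ∑ T ∈ Finset.univ.filter (fun T : Finset V => P T),
          if τ i = T then p i else 0 := Finset.sum_comm
    _ = ∑ i ∈ Finset.univ, if P (τ i) then p i else 0 := by
        apply Finset.sum_congr rfl
        intro i _
        rw [Finset.sum_ite_eq]
        simp
    _ = ∑ i ∈ Finset.univ.filter (fun i => P (τ i)), p i := (Finset.sum_filter _ _).symm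

/-- From a finite distribution over stable sets with pointwise coverage `≥ 1/Wt`,
get a fractional majority coloring of weight `Wt`. -/
lemma exists_frac (E : V → V → Prop) (Wt : ℝ) (hW : 0 ≤ Wt) {ι : Type*} [Fintype ι]
    (p : ι → ℝ) (hp : ∀ i, 0 ≤ p i) (hsum : ∑ i, p i = 1)
    (τ : ι → Finset V) (hstab : ∀ i, StableSet E (τ i))
    (hcov : ∀ v : V, 1 ≤ Wt * ∑ i ∈ Finset.univ.filter (fun i => v ∈ τ i), p i) :
    HasFracMajorityColoring E Wt := by
  classical
  refine ⟨fun T => Wt * ∑ i ∈ Finset.univ.filter (fun i => τ i = T), p i, ?_, ?_, ?_, ?_⟩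
  · intro T
    exact mul_nonneg hW (Finset.sum_nonneg fun i _ => hp i)
  · intro T hT
    dsimp only
    have : ∑ i ∈ Finset.univ.filter (fun i => τ i = T), p i = 0 := by
      apply Finset.sum_eq_zero
      intro i hi
      rw [Finset.mem_filter] at hi
      exact absurd (hi.2 ▸ hstab i) hT
    rw [this, mul_zero]
  · intro v
    dsimp only
    rw [← Finset.mul_sum]
    rw [sum_fiber_swap p τ (fun T => v ∈ T)]
    exact hcov v
  · dsimp only
    have : ∑ T : Finset V, Wt * ∑ i ∈ Finset.univ.filter (fun i => τ i = T), p i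
        = Wt * ∑ T ∈ Finset.univ.filter (fun _ : Finset V => True),
            ∑ i ∈ Finset.univ.filter (fun i => τ i = T), p i := by
      rw [Finset.filter_true_of_mem (fun _ _ => trivial), ← Finset.mul_sum]
    rw [this, sum_fiber_swap p τ (fun _ => True),
      Finset.filter_true_of_mem (fun _ _ => trivial), hsum, mul_one]


end FracMaj

set_option maxHeartbeats 1000000 in
open FracMaj in
/-- There is a constant `C > 0` such that for every `ε > 0`,
every digraph whose minimum out-degree is at least `C·(1/ε)²·ln(2/ε)` admits a
fractional majority coloring with total weight at most `2 + ε`. -/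
theorem fracMajority_weight_two_plus_eps_of_large_min_outdegree :
    ∃ C : ℝ, 0 < C ∧ ∀ ε : ℝ, 0 < ε →
      ∀ (V : Type) [Fintype V] (E : V → V → Prop), (∀ v : V, ¬ E v v) →
        (∀ v : V, C * (1 / ε) ^ 2 * Real.log (2 / ε) ≤ ((outNbrs E v).card : ℝ)) →
        HasFracMajorityColoring E (2 + ε) := by
  refine ⟨100000, by norm_num, ?_⟩
  intro ε hε V _ E hE hmin
  have h2ε : (0:ℝ) < 2 + ε := by linarith
  rcases le_or_gt ε (399/200) with hcase | hcase
  · -- Regime I : ε ≤ 2 - 1/200, biased scheme 1 only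
    set u : ℝ := ε / (2 + ε) with hu_def
    have hu0 : 0 < u := div_pos hε h2ε
    have huε : (2 + ε) * u = ε := by
      rw [hu_def]; field_simp
    have hu2 : u < 1/2 := by
      rw [hu_def, div_lt_iff₀ h2ε]; linarith
    have hεle : ε ≤ 2 := by linarith
    have hu4 : ε ≤ 4 * u := by nlinarith [huε]
    set q : ℝ := 1/2 - u/4 with hq_def
    clear_value q u
    have hq0 : 0 ≤ q := by rw [hq_def]; linarith
    have hq2 : q ≤ 1/2 := by rw [hq_def]; linarith
    have hq1 : q ≤ 1 := le_trans hq2 (by norm_num)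
    -- L = log(2/ε) ≥ 1/400
    have hL : (1:ℝ)/400 ≤ Real.log (2/ε) := by
      rw [Real.le_log_iff_exp_le (by positivity)]
      have h2 := Real.add_one_le_exp (-(1/400) : ℝ)
      have hinv : Real.exp (-(1/400) : ℝ) * Real.exp ((1:ℝ)/400) = 1 := by
        rw [← Real.exp_add]; norm_num
      have h4 := Real.exp_pos ((1:ℝ)/400)
      have h1 : Real.exp ((1:ℝ)/400) ≤ 400/399 := by
        nlinarith [mul_le_mul_of_nonneg_right h2 h4.le]
      calc Real.exp ((1:ℝ)/400) ≤ 400/399 := h1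
        _ ≤ 2/ε := by
            rw [div_le_div_iff₀ (by norm_num) hε]
            linarith
    have hcov : ∀ v : V, 1 ≤ (2 + ε) *
        ∑ S ∈ (Finset.univ : Finset (Finset V)).filter (fun S => v ∈ T1 E S), pr q S := by
      intro v
      have hv := hmin v
      set L : ℝ := Real.log (2/ε) with hL_def
      set d : ℕ := (outNbrs E v).card with hd_def
      set m : ℕ := d / 2 with hm_def
      clear_value m d L
      -- basic consequences of the degree hypothesis
      have hv2 : 100000 * L ≤ ε^2 * (d:ℝ) := by
        have hmul := mul_le_mul_of_nonneg_left hv (le_of_lt (by positivity : (0:ℝ) < ε^2))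
        have heq : ε^2 * (100000 * (1/ε)^2 * L) = 100000 * L := by
          field_simp
        rw [heq] at hmul
        exact hmul
      have hdpos : (0:ℝ) ≤ (d:ℝ) := Nat.cast_nonneg d
      have hε2 : ε^2 ≤ 4 := by nlinarith
      have hd62 : (62:ℝ) ≤ (d:ℝ) := by nlinarith [hv2, hL]
      -- tail bound
      have hqq : 4*q*(1-q) = 1 - u^2/4 := by rw [hq_def]; ring
      have h01 : (0:ℝ) ≤ 1 - u^2/4 := by nlinarith [hu2, hu0]
      have hstep1 : 1 - u^2/4 ≤ Real.exp (-(u^2/4)) := by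
        have := Real.add_one_le_exp (-(u^2/4))
        linarith
      have hm_cast : ((d:ℝ) - 1)/2 ≤ (m:ℝ) := by
        have hnat : d ≤ 2*m + 1 := by rw [hm_def]; omega
        have : (d:ℝ) ≤ 2*(m:ℝ) + 1 := by exact_mod_cast hnat
        linarith
      -- log (2/u) ≤ 2 log 2 + L
      have hu_ne : u ≠ 0 := ne_of_gt hu0
      have h2u_eq : 2/u = 2*(2+ε)/ε := by
        rw [hu_def]
        field_simp
      have hlogu : Real.log (2/u) ≤ 2*Real.log 2 + L := by
        have h8 : 2/u ≤ 8/ε := by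
          rw [h2u_eq, div_le_div_iff₀ hε hε]
          nlinarith
        have hlog8 : Real.log (8/ε) = 2*Real.log 2 + L := by
          rw [hL_def, show (8:ℝ)/ε = 4*(2/ε) by ring,
            Real.log_mul (by norm_num) (by positivity),
            show (4:ℝ) = 2^2 by norm_num, Real.log_pow]
          push_cast
          ring
        calc Real.log (2/u) ≤ Real.log (8/ε) :=
              Real.log_le_log (by positivity) h8
          _ = 2*Real.log 2 + L := hlog8
      have hlog2 : Real.log 2 < 0.6931471808 := Real.log_two_lt_d9
      -- the exponent inequality : log(2/u) ≤ (u²/4) * m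
      have hεu2 : ε^2 ≤ 16*u^2 := by nlinarith [hu4, hu0.le, hε.le]
      have hexp_ineq : Real.log (2/u) ≤ (u^2/4) * (m:ℝ) := by
        have e1 : ε^2 * ((d:ℝ) - 1) ≤ 16*u^2 * ((d:ℝ) - 1) :=
          mul_le_mul_of_nonneg_right hεu2 (by linarith)
        have e2 : 100000 * L - 4 ≤ ε^2 * ((d:ℝ) - 1) := by nlinarith [hv2, hε2]
        have e3 : (u^2/4) * (((d:ℝ) - 1)/2) ≤ (u^2/4) * (m:ℝ) :=
          mul_le_mul_of_nonneg_left hm_cast (by positivity)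
        nlinarith [hL, hlogu, hlog2, e1, e2, e3]
      have htail : (4*q*(1-q))^m ≤ u/2 := by
        calc (4*q*(1-q))^m = (1 - u^2/4)^m := by rw [hqq]
          _ ≤ Real.exp (-(u^2/4))^m := pow_le_pow_left₀ h01 hstep1 m
          _ = Real.exp ((m:ℝ) * (-(u^2/4))) := by rw [Real.exp_nat_mul]
          _ ≤ u/2 := by
              rw [show u/2 = (2/u)⁻¹ by rw [inv_div],
                ← Real.exp_log (show (0:ℝ) < (2/u)⁻¹ by positivity), Real.exp_le_exp,
                Real.log_inv]
              nlinarith [hexp_ineq]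
      -- coverage
      rw [← Finset.powerset_univ, cov1 E hE q v, ← hd_def, ← hm_def]
      have hbs : 1 - (4*q*(1-q))^m ≤ bsum q d m := by
        rw [hm_def]
        exact bsum_ge_one_sub_tail hq0 hq2 d
      have hb1 : q * (1 - u/2) ≤ q * bsum q d m :=
        mul_le_mul_of_nonneg_left (by linarith) hq0
      have huε2 : (2+ε) * u * u = ε * u := by rw [huε]
      have hkey : 1 ≤ (2+ε) * (q * (1 - u/2)) := by
        rw [hq_def]
        nlinarith [huε, huε2, mul_nonneg hu0.le hε.le]
      nlinarith [mul_le_mul_of_nonneg_left hb1 h2ε.le]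
    have hsum1 : ∑ S : Finset V, pr q S = 1 := by
      have := sum_pr (W := V) q
      rwa [Finset.powerset_univ] at this
    exact exists_frac E (2+ε) h2ε.le (pr q) (fun S => pr_nonneg hq0 hq1 S) hsum1
      (T1 E) (T1_stable E) hcov
  · -- Regime II : ε > 2 - 1/200, mixture of biased scheme 1 and the booster
    have hε2 : (799:ℝ)/200 ≤ 2 + ε := by linarith
    set q : ℝ := 49/100 with hq_def
    set p : Finset V ⊕ Finset (V × Bool) → ℝ :=
      Sum.elim (fun S => (124/125) * pr q S) (fun S => (1/125) * pr (1/2 : ℝ) S) with hp_def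
    set τ : Finset V ⊕ Finset (V × Bool) → Finset V :=
      Sum.elim (T1 E) (T2 E) with hτ_def
    have hq0 : (0:ℝ) ≤ q := by rw [hq_def]; norm_num
    have hq1 : q ≤ 1 := by rw [hq_def]; norm_num
    have hp : ∀ i, 0 ≤ p i := by
      rintro (S | S) <;> simp only [hp_def, Sum.elim_inl, Sum.elim_inr]
      · exact mul_nonneg (by norm_num) (pr_nonneg hq0 hq1 S)
      · exact mul_nonneg (by norm_num) (pr_nonneg (by norm_num) (by norm_num) S)
    have hsum : ∑ i, p i = 1 := by
      rw [Fintype.sum_sum_type]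
      simp only [hp_def, Sum.elim_inl, Sum.elim_inr]
      rw [← Finset.mul_sum, ← Finset.mul_sum]
      have e1 : ∑ S : Finset V, pr q S = 1 := by
        have := sum_pr (W := V) q
        rwa [Finset.powerset_univ] at this
      have e2 : ∑ S : Finset (V × Bool), pr (1/2 : ℝ) S = 1 := by
        have := sum_pr (W := V × Bool) (1/2 : ℝ)
        rwa [Finset.powerset_univ] at this
      rw [e1, e2]
      norm_num
    have hstab : ∀ i, StableSet E (τ i) := by
      rintro (S | S)
      · exact T1_stable E S
      · exact T2_stable E S
    have hcov : ∀ v : V, 1 ≤ (2 + ε) *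
        ∑ i ∈ Finset.univ.filter (fun i => v ∈ τ i), p i := by
      intro v
      -- split the sum over the two components
      have hsplit : ∑ i ∈ Finset.univ.filter (fun i => v ∈ τ i), p i
          = (124/125) * ∑ S ∈ (Finset.univ : Finset (Finset V)).filter
              (fun S => v ∈ T1 E S), pr q S
            + (1/125) * ∑ S ∈ (Finset.univ : Finset (Finset (V × Bool))).filter
              (fun S => v ∈ T2 E S), pr (1/2 : ℝ) S := by
        rw [Finset.sum_filter, Fintype.sum_sum_type]
        simp only [hp_def, hτ_def, Sum.elim_inl, Sum.elim_inr]
        rw [Finset.sum_filter, Finset.sum_filter, Finset.mul_sum, Finset.mul_sum]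
        congr 1 <;>
          · apply Finset.sum_congr rfl
            intro S _
            split_ifs <;> ring
      rw [hsplit]
      set A : ℝ := ∑ S ∈ (Finset.univ : Finset (Finset V)).filter
          (fun S => v ∈ T1 E S), pr q S with hA_def
      set B : ℝ := ∑ S ∈ (Finset.univ : Finset (Finset (V × Bool))).filter
          (fun S => v ∈ T2 E S), pr (1/2 : ℝ) S with hB_def
      have hB0 : 0 ≤ B := by
        rw [hB_def]
        exact Finset.sum_nonneg fun S _ => pr_nonneg (by norm_num) (by norm_num) S
      have hA_eq : A = q * bsum q (outNbrs E v).card ((outNbrs E v).card / 2) := by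
        rw [hA_def, ← Finset.powerset_univ, cov1 E hE q v]
      set d : ℕ := (outNbrs E v).card with hd_def
      rcases Nat.lt_or_ge d 2 with hd | hd
      · interval_cases d
        · -- d = 0
          have hA : A = q := by rw [hA_eq, bsum_zero_left, mul_one]
          have : (1:ℝ) ≤ (799/200) * ((124/125) * A + (1/125) * B) := by
            rw [hA, hq_def]
            nlinarith [hB0]
          nlinarith [hB0, hA, mul_le_mul_of_nonneg_right hε2
            (show (0:ℝ) ≤ (124/125) * A + (1/125) * B by
              rw [hA, hq_def]; nlinarith [hB0])]
        · -- d = 1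
          have hA : A = q * (1 - q) := by rw [hA_eq, bsum_one_zero]
          have hB : (5/16 : ℝ) ≤ B := by
            rw [hB_def, ← Finset.powerset_univ]
            exact cov2_ge E hE v hd_def.symm
          have hX0 : (0:ℝ) ≤ (124/125) * A + (1/125) * B := by
            rw [hA, hq_def]; nlinarith [hB0]
          have h1 : (1:ℝ) ≤ (799/200) * ((124/125) * A + (1/125) * B) := by
            rw [hA, hq_def]
            nlinarith [hB]
          nlinarith [mul_le_mul_of_nonneg_right hε2 hX0]
      · -- d ≥ 2
        have hbs : (1-q)^2 * (1+2*q) ≤ bsum q d (d/2) :=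
          bsum_center_ge hq0 (by rw [hq_def]; norm_num) d hd
        have hA : q * ((1-q)^2 * (1+2*q)) ≤ A := by
          rw [hA_eq]
          exact mul_le_mul_of_nonneg_left hbs hq0
        have hX0 : (0:ℝ) ≤ (124/125) * A + (1/125) * B := by
          have hA0 : 0 ≤ A := le_trans (by rw [hq_def]; norm_num) hA
          nlinarith [hB0]
        have h1 : (1:ℝ) ≤ (799/200) * ((124/125) * A + (1/125) * B) := by
          rw [hq_def] at hA
          nlinarith [hB0, hA]
        nlinarith [mul_le_mul_of_nonneg_right hε2 hX0]
    exact exists_frac E (2+ε) h2ε.le p hp hsum τ hstab hcov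
end

section
/- Let p₁ = 0.4594. For every natural number k with k ≠ 1, the probability that a binomial random variable with parameters k and p₁ exceeds k/2 is at most the probability that a binomial random variable with parameters 3 and p₁ is at least 2; the latter probability equals 3p₁² − 2p₁³. -/
/-!
Conditioning on the last trial gives the recurrence `T(n+1, m+1) = p T(n, m) + q T(n, m+1)` for the
tails `T(n, m) = P(B(n, p) ≥ m)`, where `q = 1 - p`. Applied twice, it shows that adding two trials
to a majority vote of `2j + 1` trials changes the majority probability by
`C(2j+1, j) (pq)^(j+1) (p - q)`, which is `≤ 0` for `p ≤ 1/2`; so the odd majority probabilities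
decrease, and for `j ≥ 1` they are at most the one for three trials. An even number `2j` of trials
does no better than `2j + 1`, since an extra trial only raises `P(B ≥ j + 1)`.
-/

/-- The probability that a binomial random variable with parameters `n` and `p`
takes a value in the set of `i ∈ {0, …, n}` satisfying `P i`. -/
def binomialProb (n : ℕ) (p : ℝ) (P : ℕ → Prop) [DecidablePred P] : ℝ :=
  ∑ i ∈ (Finset.range (n + 1)).filter P,
    (n.choose i : ℝ) * p ^ i * (1 - p) ^ (n - i)

theorem binomialProb_congr {n : ℕ} {p : ℝ} {P Q : ℕ → Prop} [DecidablePred P] [DecidablePred Q]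
    (h : ∀ i ≤ n, P i ↔ Q i) : binomialProb n p P = binomialProb n p Q :=
  Finset.sum_congr
    (Finset.filter_congr fun i hi => h i (Nat.lt_succ_iff.1 (Finset.mem_range.1 hi)))
    fun _ _ => rfl

theorem binomialProb_nonneg (n : ℕ) {p : ℝ} (hp₀ : 0 ≤ p) (hp₁ : p ≤ 1) (P : ℕ → Prop)
    [DecidablePred P] : 0 ≤ binomialProb n p P := by
  have : 0 ≤ 1 - p := by linarith
  exact Finset.sum_nonneg fun _ _ => by positivity

theorem binomialProb_succ (n : ℕ) (p : ℝ) (P : ℕ → Prop) [DecidablePred P] :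
    binomialProb (n + 1) p P =
      p * binomialProb n p (fun i => P (i + 1)) + (1 - p) * binomialProb n p P := by
  simp only [binomialProb, Finset.sum_filter, Finset.mul_sum]
  rw [Finset.sum_range_succ', Finset.sum_range_succ, Finset.sum_range_succ _ n,
    Finset.sum_range_succ' _ n, add_add_add_comm, ← Finset.sum_add_distrib, add_assoc]
  congr 1
  · refine Finset.sum_congr rfl fun i hi => ?_
    obtain ⟨d, rfl⟩ : ∃ d, n = i + 1 + d := ⟨n - (i + 1), by simp at hi; omega⟩
    rw [Nat.choose_succ_succ', show i + 1 + d + 1 - (i + 1) = d + 1 by omega,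
      show i + 1 + d - i = d + 1 by omega, show i + 1 + d - (i + 1) = d by omega]
    split_ifs
    · push_cast
      ring
    · simp
  · split_ifs <;> simp <;> ring

theorem binomialProb_ge_eq_add (n m : ℕ) (p : ℝ) :
    binomialProb n p (m ≤ ·) =
      binomialProb n p (m + 1 ≤ ·) + n.choose m * p ^ m * (1 - p) ^ (n - m) := by
  rcases le_or_gt m n with hm | hm
  · have hfilter : (Finset.range (n + 1)).filter (m ≤ ·) =
        insert m ((Finset.range (n + 1)).filter (m + 1 ≤ ·)) := by
      ext i
      simp only [Finset.mem_filter, Finset.mem_range, Finset.mem_insert]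
      omega
    rw [binomialProb, hfilter, Finset.sum_insert (by simp), add_comm]
    rfl
  · rw [binomialProb_congr (Q := (m + 1 ≤ ·)) fun i hi => by omega, Nat.choose_eq_zero_of_lt hm]
    simp

theorem binomialProb_ge_succ (n m : ℕ) (p : ℝ) :
    binomialProb (n + 1) p (m + 1 ≤ ·) =
      p * binomialProb n p (m ≤ ·) + (1 - p) * binomialProb n p (m + 1 ≤ ·) := by
  rw [binomialProb_succ, binomialProb_congr fun i _ => Nat.add_le_add_iff_right]

theorem binomialProb_ge_le_succ (n m : ℕ) {p : ℝ} (hp₀ : 0 ≤ p) (hp₁ : p ≤ 1) :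
    binomialProb n p (m + 1 ≤ ·) ≤ binomialProb (n + 1) p (m + 1 ≤ ·) := by
  rw [binomialProb_ge_succ, binomialProb_ge_eq_add n m]
  have : 0 ≤ 1 - p := by linarith
  have : 0 ≤ p * ((n.choose m : ℝ) * p ^ m * (1 - p) ^ (n - m)) := by positivity
  linarith

theorem binomialProb_ge_add_two (n m : ℕ) (p : ℝ) :
    binomialProb (n + 2) p (m + 2 ≤ ·) = binomialProb n p (m + 1 ≤ ·)
      + p ^ 2 * (n.choose m * p ^ m * (1 - p) ^ (n - m))
      - (1 - p) ^ 2 * (n.choose (m + 1) * p ^ (m + 1) * (1 - p) ^ (n - (m + 1))) := by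
  have h₁ := binomialProb_ge_succ (n + 1) (m + 1) p
  have h₂ := binomialProb_ge_succ n m p
  have h₃ := binomialProb_ge_succ n (m + 1) p
  have h₄ := binomialProb_ge_eq_add n m p
  have h₅ := binomialProb_ge_eq_add n (m + 1) p
  linear_combination h₁ + p * h₂ + (1 - p) * h₃ + p ^ 2 * h₄ - (1 - p) ^ 2 * h₅

theorem binomialProb_odd_majority_succ_le (j : ℕ) {p : ℝ} (hp₀ : 0 ≤ p) (hp : p ≤ 1 / 2) :
    binomialProb (2 * j + 3) p (j + 2 ≤ ·) ≤ binomialProb (2 * j + 1) p (j + 1 ≤ ·) := by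
  rw [binomialProb_ge_add_two (2 * j + 1) j, Nat.choose_symm_half,
    show 2 * j + 1 - j = j + 1 by omega, show 2 * j + 1 - (j + 1) = j by omega]
  have : 0 ≤ 1 - p := by linarith
  have : 0 ≤ ((2 * j + 1).choose j : ℝ) * p ^ (j + 1) * (1 - p) ^ (j + 1) := by positivity
  linear_combination mul_nonneg this (by linarith : (0 : ℝ) ≤ 1 - 2 * p)

theorem antitone_binomialProb_odd_majority {p : ℝ} (hp₀ : 0 ≤ p) (hp : p ≤ 1 / 2) :
    Antitone fun j => binomialProb (2 * j + 1) p (j + 1 ≤ ·) :=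
  antitone_nat_of_succ_le fun j => binomialProb_odd_majority_succ_le j hp₀ hp

theorem binomialProb_three_ge_two (p : ℝ) :
    binomialProb 3 p (2 ≤ ·) = 3 * p ^ 2 - 2 * p ^ 3 := by
  rw [binomialProb, show (Finset.range 4).filter (2 ≤ ·) = {2, 3} by decide,
    Finset.sum_pair (by norm_num), show Nat.choose 3 2 = 3 by rfl, Nat.choose_self]
  push_cast
  ring

theorem binomialProb_majority_le {p : ℝ} (hp₀ : 0 ≤ p) (hp : p ≤ 1 / 2) {k : ℕ} (hk : k ≠ 1) :
    binomialProb k p (fun i => k < 2 * i) ≤ binomialProb 3 p (2 ≤ ·) := by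
  obtain ⟨j, rfl | rfl⟩ := Nat.even_or_odd' k
  · rcases Nat.eq_zero_or_pos j with rfl | hj
    · exact binomialProb_nonneg 3 hp₀ (by linarith) _
    · rw [binomialProb_congr fun i _ => show 2 * j < 2 * i ↔ j + 1 ≤ i by omega]
      exact (binomialProb_ge_le_succ _ _ hp₀ (by linarith)).trans
        (antitone_binomialProb_odd_majority hp₀ hp hj)
  · rw [binomialProb_congr fun i _ => show 2 * j + 1 < 2 * i ↔ j + 1 ≤ i by omega]
    exact antitone_binomialProb_odd_majority hp₀ hp (by omega : 1 ≤ j)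

/-- With `p₁ = 0.4594`, for every `k ≠ 1` the probability
that `B(k, p₁) > k/2` is at most the probability that `B(3, p₁) ≥ 2`, and the
latter equals `3 p₁² − 2 p₁³`. -/
theorem binomial_majority_prob_le :
    (∀ k : ℕ, k ≠ 1 →
      binomialProb k 0.4594 (fun i => k < 2 * i) ≤
        binomialProb 3 0.4594 (fun i => 2 ≤ i)) ∧
    binomialProb 3 0.4594 (fun i => 2 ≤ i) =
      3 * (0.4594 : ℝ) ^ 2 - 2 * (0.4594 : ℝ) ^ 3 :=
  ⟨fun _ hk => binomialProb_majority_le (by norm_num) (by norm_num) hk,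
    binomialProb_three_ge_two _⟩
end
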